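/- arXiv:2203.03318 — 4 statements merged into one kernel-verified Lean document; each statement's English description precedes it below -/
import Mathlib

section
/- For every n ≥ 2: s_n^{M,N}(x) = γ_{n,n} p_n^{[2]}(x) + γ_{n−1,n} p_{n−1}^{[2]}(x) + γ_{n−2,n} p_{n−2}^{[2]}(x), where γ_{n,n} = t_n/r_n^{[2]} = (t_n/r_{n+1})·(K_{n+1}(c,c)/K_n(c,c))^{1/2}, γ_{n−1,n} = −(K_{n−1}(c,c)/K_n(c,c))^{1/2}·( d_{n−1}·t_n/r_n + e_{n−1}·(r_n/r_{n−1})·[ M·s_n^{M,N}(c)·p_{n−1}(c) + N·(s_n^{M,N})′(c)·p_{n−1}′(c) ] ), and γ_{n−2,n} = (r_{n−1}/t_n)·(K_{n−2}(c,c)/K_{n−1}(c,c))^{1/2}. -/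
open MeasureTheory Polynomial

/-- Squared norm `‖Q‖_μ² = ∫ Q(x)² dμ`. -/
noncomputable def nrmSq (μ : Measure ℝ) (Q : Polynomial ℝ) : ℝ := ∫ x, Q.eval x ^ 2 ∂μ

/-- Squared norm in the 2-iterated Christoffel measure `(x-c)² dμ`. -/
noncomputable def nrmSq2 (μ : Measure ℝ) (c : ℝ) (Q : Polynomial ℝ) : ℝ :=
  ∫ x, Q.eval x ^ 2 * (x - c) ^ 2 ∂μ

/-- Sobolev-type inner product `⟨f,g⟩_S = ∫ f g dμ + M f(c) g(c) + N f'(c) g'(c)`. -/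
noncomputable def ipS (μ : Measure ℝ) (c M N : ℝ) (f g : Polynomial ℝ) : ℝ :=
  (∫ x, f.eval x * g.eval x ∂μ) + M * (f.eval c * g.eval c)
    + N * ((derivative f).eval c * (derivative g).eval c)

/-- Leading coefficient `r_n = 1/‖P_n‖_μ` of the orthonormal polynomial `p_n`. -/
noncomputable def rC (μ : Measure ℝ) (P : ℕ → Polynomial ℝ) (n : ℕ) : ℝ :=
  1 / Real.sqrt (nrmSq μ (P n))

/-- Leading coefficient `r_n^{[2]} = 1/‖P_n^{[2]}‖_{[2]}`. -/
noncomputable def r2C (μ : Measure ℝ) (c : ℝ) (P2 : ℕ → Polynomial ℝ) (n : ℕ) : ℝ :=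
  1 / Real.sqrt (nrmSq2 μ c (P2 n))

/-- Orthonormal polynomial `p_n = P_n/‖P_n‖_μ`. -/
noncomputable def onP (μ : Measure ℝ) (P : ℕ → Polynomial ℝ) (n : ℕ) : Polynomial ℝ :=
  C (rC μ P n) * P n

/-- Orthonormal polynomial `p_n^{[2]} = P_n^{[2]}/‖P_n^{[2]}‖_{[2]}`. -/
noncomputable def onP2 (μ : Measure ℝ) (c : ℝ) (P2 : ℕ → Polynomial ℝ) (n : ℕ) : Polynomial ℝ :=
  C (r2C μ c P2 n) * P2 n

/-- Leading coefficient `t_n = 1/‖S_n^{M,N}‖_S` of the Sobolev-type orthonormal polynomial. -/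
noncomputable def tC (μ : Measure ℝ) (c M N : ℝ) (S : ℕ → Polynomial ℝ) (n : ℕ) : ℝ :=
  1 / Real.sqrt (ipS μ c M N (S n) (S n))

/-- Sobolev-type orthonormal polynomial `s_n^{M,N} = S_n^{M,N}/‖S_n^{M,N}‖_S`. -/
noncomputable def sN (μ : Measure ℝ) (c M N : ℝ) (S : ℕ → Polynomial ℝ) (n : ℕ) : Polynomial ℝ :=
  C (tC μ c M N S n) * S n

/-- Diagonal kernel value `K_n(c,c) = Σ_{j=0}^n P_j(c)²/‖P_j‖_μ²`. -/
noncomputable def Kcc (μ : Measure ℝ) (P : ℕ → Polynomial ℝ) (c : ℝ) (n : ℕ) : ℝ :=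
  ∑ j ∈ Finset.range (n + 1), (P j).eval c ^ 2 / nrmSq μ (P j)

/-- Kernel `K_n^{(0,j)}(x,c)` as a polynomial in `x`:
`Σ_{k=0}^n (d/dy)^j P_k(y)|_{y=c} · P_k(x)/‖P_k‖_μ²`. -/
noncomputable def Kpoly (μ : Measure ℝ) (P : ℕ → Polynomial ℝ) (c : ℝ) (n j : ℕ) : Polynomial ℝ :=
  ∑ k ∈ Finset.range (n + 1), C ((derivative^[j] (P k)).eval c / nrmSq μ (P k)) * P k

/-- Mixed derivative of the kernel at the diagonal:
`K_n^{(i,j)}(c,c) = Σ_{k=0}^n P_k^{(i)}(c) P_k^{(j)}(c)/‖P_k‖_μ²`. -/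
noncomputable def Kder (μ : Measure ℝ) (P : ℕ → Polynomial ℝ) (c : ℝ) (n i j : ℕ) : ℝ :=
  ∑ k ∈ Finset.range (n + 1),
    (derivative^[i] (P k)).eval c * (derivative^[j] (P k)).eval c / nrmSq μ (P k)

/-- Connection coefficient `d_n`. -/
noncomputable def dCoef (P : ℕ → Polynomial ℝ) (c : ℝ) (n : ℕ) : ℝ :=
  ((P (n + 2)).eval c * (derivative (P n)).eval c
      - (derivative (P (n + 2))).eval c * (P n).eval c) /
    ((P (n + 1)).eval c * (derivative (P n)).eval c
      - (derivative (P (n + 1))).eval c * (P n).eval c)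

/-- Connection coefficient `e_n`. -/
noncomputable def eCoef (P : ℕ → Polynomial ℝ) (c : ℝ) (n : ℕ) : ℝ :=
  ((P (n + 2)).eval c * (derivative (P (n + 1))).eval c
      - (derivative (P (n + 2))).eval c * (P (n + 1)).eval c) /
    ((P (n + 1)).eval c * (derivative (P n)).eval c
      - (derivative (P (n + 1))).eval c * (P n).eval c)

/-- Connection coefficient `γ_{j,n} = ⟨s_n^{M,N}, p_j^{[2]}⟩_{[2]}`. -/
noncomputable def gamC (μ : Measure ℝ) (c M N : ℝ) (S P2 : ℕ → Polynomial ℝ) (j n : ℕ) : ℝ :=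
  ∫ x, (sN μ c M N S n).eval x * (onP2 μ c P2 j).eval x * (x - c) ^ 2 ∂μ

/-- Jacobi matrix of `μ`: `J(n,m) = ∫ x p_n(x) p_m(x) dμ`. -/
noncomputable def Jmat (μ : Measure ℝ) (P : ℕ → Polynomial ℝ) (n m : ℕ) : ℝ :=
  ∫ x, x * ((onP μ P n).eval x * (onP μ P m).eval x) ∂μ

/-- Jacobi matrix of `(x-c)² dμ`: `J_{[2]}(n,m) = ∫ x p_n^{[2]}(x) p_m^{[2]}(x) (x-c)² dμ`. -/
noncomputable def J2mat (μ : Measure ℝ) (c : ℝ) (P2 : ℕ → Polynomial ℝ) (n m : ℕ) : ℝ :=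
  ∫ x, x * ((onP2 μ c P2 n).eval x * (onP2 μ c P2 m).eval x) * (x - c) ^ 2 ∂μ

/-- Five-diagonal matrix `H(n,m) = ⟨(x-c)² s_n^{M,N}, s_m^{M,N}⟩_S`. -/
noncomputable def Hmat (μ : Measure ℝ) (c M N : ℝ) (S : ℕ → Polynomial ℝ) (n m : ℕ) : ℝ :=
  ipS μ c M N ((X - C c) ^ 2 * sN μ c M N S n) (sN μ c M N S m)

/-- Kronecker delta. -/
noncomputable def kdel (n m : ℕ) : ℝ := if n = m then 1 else 0


/-!
Let `P2 m` be the monic orthogonal polynomials of `(x - c)² dμ`. The difference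
`(x - c)² P2 m - P (m+2)` has degree `≤ m + 1` and is orthogonal to all polynomials of degree
`< m`, hence equals `α P (m+1) + β P m`. The double zero at `c` forces `α = -d_m` and `β = e_m`,
because the Wronskian `P_m(c) P'_{m+1}(c) - P_{m+1}(c) P'_m(c) = ‖P_m‖² K_m(c,c)` (confluent
Christoffel–Darboux) does not vanish. Pairing this connection formula with `P2 m` gives
`‖P2 m‖²_{[2]} = e_m ‖P_m‖² = ‖P_{m+1}‖² K_{m+1}(c,c) / K_m(c,c)`.

Now expand `s_n` in the orthonormal basis `p_j^{[2]}`. The point terms of the Sobolev product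
vanish on multiples of `(x - c)²`, so `⟨S_n, P2 j⟩_{[2]} = ⟨S_n, (x - c)² P2 j⟩_S`. This is zero
for `j < n - 2` and `‖S_n‖²_S` for `j = n - 2`. For `j = n - 1` the connection formula turns it
into `∫ S_n P_n` and `∫ S_n P_{n-1}`, and the latter is minus the point terms, by Sobolev
orthogonality.
-/

open Finset

namespace Polynomial

variable {R : Type*} [CommRing R]

theorem degree_sub_lt_of_monic [Nontrivial R] {p q : R[X]} {n : ℕ} (hp : p.Monic) (hq : q.Monic)
    (hpn : p.natDegree = n) (hqn : q.natDegree = n) : (p - q).degree < n := by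
  have h := degree_sub_lt_left (p := p) (q := q)
    (by rw [degree_eq_natDegree hp.ne_zero, degree_eq_natDegree hq.ne_zero, hpn, hqn])
    hp.ne_zero (by rw [hp.leadingCoeff, hq.leadingCoeff])
  rwa [degree_eq_natDegree hp.ne_zero, hpn] at h

theorem degree_divByMonic_X_sub_C_lt {p : R[X]} {n : ℕ} (c : R) (hp : p.degree ≤ n) :
    (p /ₘ (X - C c)).degree < n := by
  nontriviality R
  by_cases hp0 : p = 0
  · simp [hp0]
  · exact (degree_divByMonic_lt p _ hp0 (by rw [degree_X_sub_C]; exact zero_lt_one)).trans_le hp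

theorem monic_X_sub_C_sq_mul [Nontrivial R] {q : R[X]} (c : R) (hq : q.Monic) :
    ((X - C c) ^ 2 * q).Monic :=
  ((monic_X_sub_C c).pow 2).mul hq

theorem natDegree_X_sub_C_sq_mul [Nontrivial R] {q : R[X]} (c : R) (hq : q.Monic) :
    ((X - C c) ^ 2 * q).natDegree = q.natDegree + 2 := by
  rw [((monic_X_sub_C c).pow 2).natDegree_mul hq, (monic_X_sub_C c).natDegree_pow,
    natDegree_X_sub_C, add_comm]

end Polynomial

structure IsMonicOrthogonal {R : Type*} [CommRing R] (B : LinearMap.BilinForm R R[X])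
    (Q : ℕ → R[X]) : Prop where
  monic : ∀ n, (Q n).Monic
  natDegree_eq : ∀ n, (Q n).natDegree = n
  apply_eq_zero : ∀ m n, m ≠ n → B (Q m) (Q n) = 0

namespace IsMonicOrthogonal

section CommRing

variable {R : Type*} [CommRing R] [Nontrivial R] {B : LinearMap.BilinForm R R[X]} {Q : ℕ → R[X]}

theorem degree_eq (hQ : IsMonicOrthogonal B Q) (n : ℕ) : (Q n).degree = n := by
  rw [degree_eq_natDegree (hQ.monic n).ne_zero, hQ.natDegree_eq n]

theorem mem_span_of_degree_lt (hQ : IsMonicOrthogonal B Q) {n : ℕ} {q : R[X]}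
    (hq : q.degree < n) : q ∈ Submodule.span R (Q '' Set.Iio n) := by
  let S : Sequence R := ⟨Q, hQ.degree_eq⟩
  rw [show Q = ⇑S from rfl, S.span_degreeLT fun i _ => by simp [S, (hQ.monic i).leadingCoeff]]
  exact mem_degreeLT.mpr hq

theorem apply_eq_zero_of_degree_lt (hQ : IsMonicOrthogonal B Q) {n : ℕ} {q : R[X]}
    (hq : q.degree < n) : B (Q n) q = 0 := by
  have hspan : Submodule.span R (Q '' Set.Iio n) ≤ LinearMap.ker (B (Q n)) :=
    Submodule.span_le.mpr <| by
      rintro _ ⟨j, hj, rfl⟩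
      exact hQ.apply_eq_zero n j (ne_of_gt hj)
  exact hspan (hQ.mem_span_of_degree_lt hq)

theorem apply_eq_apply_self_of_monic (hQ : IsMonicOrthogonal B Q) {n : ℕ} {q : R[X]}
    (hq : q.Monic) (hqn : q.natDegree = n) : B (Q n) q = B (Q n) (Q n) := by
  rw [← sub_add_cancel q (Q n), map_add, hQ.apply_eq_zero_of_degree_lt
    (degree_sub_lt_of_monic hq (hQ.monic n) hqn (hQ.natDegree_eq n)), zero_add]

theorem eq_zero_of_forall_apply_eq_zero (hQ : IsMonicOrthogonal B Q)
    (hB : ∀ q, B q q = 0 → q = 0) {n : ℕ} {q : R[X]} (hq : q.degree < n)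
    (h : ∀ j < n, B (Q j) q = 0) : q = 0 := by
  have hspan : Submodule.span R (Q '' Set.Iio n) ≤ LinearMap.ker (B.flip q) :=
    Submodule.span_le.mpr <| by
      rintro _ ⟨j, hj, rfl⟩
      exact h j hj
  exact hB q (hspan (hQ.mem_span_of_degree_lt hq))

end CommRing

variable {K : Type*} [Field K] {B : LinearMap.BilinForm K K[X]} {Q : ℕ → K[X]}

theorem eq_sum_Ico (hQ : IsMonicOrthogonal B Q) (hB : ∀ q, B q q = 0 → q = 0) {m n : ℕ}
    {q : K[X]} (hq : q.degree < n) (h : ∀ j < m, B (Q j) q = 0) :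
    q = ∑ j ∈ Ico m n, C (B (Q j) q / B (Q j) (Q j)) * Q j := by
  have hQQ : ∀ j, B (Q j) (Q j) ≠ 0 := fun j h => (hQ.monic j).ne_zero (hB _ h)
  rw [← sub_eq_zero]
  refine hQ.eq_zero_of_forall_apply_eq_zero hB (n := n) ?_ fun i hi => ?_
  · refine mem_degreeLT.mp (Submodule.sub_mem _ (mem_degreeLT.mpr hq) (Submodule.sum_mem _ ?_))
    intro j hj
    rw [C_mul']
    exact Submodule.smul_mem _ _ (mem_degreeLT.mpr
      (by rw [hQ.degree_eq]; exact_mod_cast (mem_Ico.mp hj).2))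
  have hterm : ∀ j ∈ Ico m n, B (Q i) (C (B (Q j) q / B (Q j) (Q j)) * Q j)
      = if i = j then B (Q i) q else 0 := by
    intro j _
    rw [C_mul', map_smul, smul_eq_mul]
    split_ifs with hij
    · subst hij; field_simp [hQQ i]
    · rw [hQ.apply_eq_zero i j hij, mul_zero]
  rw [map_sub, map_sum, sum_congr rfl hterm, sum_ite_eq]
  by_cases him : m ≤ i
  · rw [if_pos (mem_Ico.mpr ⟨him, hi⟩), sub_self]
  · rw [if_neg (fun hmem => him (mem_Ico.mp hmem).1), h i (not_le.mp him), sub_zero]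

end IsMonicOrthogonal

section MomentForms

variable {μ : Measure ℝ}

theorem integrable_eval_of_integrable_pow (hmom : ∀ n : ℕ, Integrable (fun x : ℝ => x ^ n) μ)
    (q : ℝ[X]) : Integrable (fun x => q.eval x) μ := by
  induction q using Polynomial.induction_on' with
  | add p q hp hq => simp only [eval_add]; exact hp.add hq
  | monomial n a => simpa [eval_monomial] using (hmom n).const_mul a

variable (hmom : ∀ n : ℕ, Integrable (fun x : ℝ => x ^ n) μ)

noncomputable def momentFunctional : ℝ[X] →ₗ[ℝ] ℝ where
  toFun q := ∫ x, q.eval x ∂μ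
  map_add' p q := by
    simp only [eval_add]
    exact integral_add (integrable_eval_of_integrable_pow hmom p)
      (integrable_eval_of_integrable_pow hmom q)
  map_smul' a q := by
    simp only [eval_smul, smul_eq_mul, RingHom.id_apply]
    exact integral_const_mul a _

noncomputable def weightedForm (w : ℝ[X]) : LinearMap.BilinForm ℝ ℝ[X] :=
  (LinearMap.mul ℝ ℝ[X]).compr₂ ((momentFunctional hmom).comp (LinearMap.mulRight ℝ w))

noncomputable def sobolevForm (c M N : ℝ) : LinearMap.BilinForm ℝ ℝ[X] :=
  weightedForm hmom 1 + M • (LinearMap.mul ℝ ℝ).compl₁₂ (leval c) (leval c)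
    + N • (LinearMap.mul ℝ ℝ).compl₁₂ (leval c ∘ₗ derivative) (leval c ∘ₗ derivative)

variable {hmom}

theorem weightedForm_apply (w f g : ℝ[X]) :
    weightedForm hmom w f g = ∫ x, f.eval x * g.eval x * w.eval x ∂μ := by
  simp [weightedForm, momentFunctional]

theorem sobolevForm_apply (c M N : ℝ) (f g : ℝ[X]) :
    sobolevForm hmom c M N f g = ipS μ c M N f g := by
  simp [sobolevForm, ipS, weightedForm_apply]

theorem weightedForm_comm (w f g : ℝ[X]) : weightedForm hmom w f g = weightedForm hmom w g f := by
  simp only [weightedForm_apply, mul_comm (f.eval _)]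

theorem weightedForm_mul_left (w v f g : ℝ[X]) :
    weightedForm hmom w (v * f) g = weightedForm hmom w f (v * g) := by
  simp only [weightedForm_apply, eval_mul]
  congr 1 with x
  ring

theorem weightedForm_one_apply_mul (w f g : ℝ[X]) :
    weightedForm hmom 1 f (w * g) = weightedForm hmom w f g := by
  simp only [weightedForm_apply, eval_mul, eval_one]
  congr 1 with x
  ring

theorem weightedForm_one_apply_self (q : ℝ[X]) : weightedForm hmom 1 q q = nrmSq μ q := by
  simp only [weightedForm_apply, nrmSq, eval_one, mul_one, sq]

theorem weightedForm_sq_apply_self (c : ℝ) (q : ℝ[X]) :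
    weightedForm hmom ((X - C c) ^ 2) q q = nrmSq2 μ c q := by
  rw [weightedForm_apply, nrmSq2]
  simp only [sq, eval_mul, eval_sub, eval_X, eval_C]

theorem eval_X_sub_C_sq_mul (c : ℝ) (q : ℝ[X]) : ((X - C c) ^ 2 * q).eval c = 0 := by
  simp

theorem eval_derivative_X_sub_C_sq_mul (c : ℝ) (q : ℝ[X]) :
    (derivative ((X - C c) ^ 2 * q)).eval c = 0 := by
  simp [derivative_mul, derivative_pow]

theorem sobolevForm_apply_X_sub_C_sq_mul (c M N : ℝ) (f q : ℝ[X]) :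
    sobolevForm hmom c M N f ((X - C c) ^ 2 * q) = weightedForm hmom ((X - C c) ^ 2) f q := by
  rw [sobolevForm_apply, ipS, eval_X_sub_C_sq_mul, eval_derivative_X_sub_C_sq_mul,
    ← weightedForm_one_apply_mul, weightedForm_apply]
  simp

end MomentForms

section OrthogonalPolynomials

variable {μ : Measure ℝ} {hmom : ∀ n : ℕ, Integrable (fun x : ℝ => x ^ n) μ} {c : ℝ}
  {P : ℕ → ℝ[X]}

theorem weightedForm_one_anisotropic (hpos : ∀ q : ℝ[X], q ≠ 0 → 0 < ∫ x, q.eval x ^ 2 ∂μ)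
    (q : ℝ[X]) (hq : weightedForm hmom 1 q q = 0) : q = 0 := by
  by_contra hq0
  exact (hpos q hq0).ne' (by rwa [weightedForm_one_apply_self] at hq)

theorem weightedForm_sq_anisotropic (hpos : ∀ q : ℝ[X], q ≠ 0 → 0 < ∫ x, q.eval x ^ 2 ∂μ)
    (c : ℝ) (q : ℝ[X]) (hq : weightedForm hmom ((X - C c) ^ 2) q q = 0) : q = 0 := by
  rw [sq, ← weightedForm_one_apply_mul, mul_assoc, ← weightedForm_mul_left] at hq
  exact (mul_eq_zero.mp (weightedForm_one_anisotropic hpos _ hq)).resolve_left (X_sub_C_ne_zero c)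

theorem weightedForm_X_sub_C_apply_self_pos
    (hpos : ∀ q : ℝ[X], q ≠ 0 → 0 < ∫ x, q.eval x ^ 2 ∂μ) (hc : ∀ᵐ x ∂μ, c < x)
    {q : ℝ[X]} (hq : q ≠ 0) : 0 < weightedForm hmom (X - C c) q q := by
  have hint : Integrable (fun x => q.eval x * q.eval x * (X - C c).eval x) μ := by
    convert integrable_eval_of_integrable_pow hmom (q * q * (X - C c)) using 2
    rw [eval_mul, eval_mul]
  have hnn : 0 ≤ᵐ[μ] fun x => q.eval x * q.eval x * (X - C c).eval x := by
    filter_upwards [hc] with x hx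
    simpa using mul_nonneg (mul_self_nonneg (q.eval x)) (sub_pos.mpr hx).le
  rw [weightedForm_apply]
  refine (integral_nonneg_of_ae hnn).lt_of_ne fun h0 => (hpos q hq).ne' ?_
  refine integral_eq_zero_of_ae ?_
  filter_upwards [(integral_eq_zero_iff_of_nonneg_ae hnn hint).mp h0.symm, hc] with x hx hcx
  simpa [sq, (sub_pos.mpr hcx).ne'] using hx

theorem nrmSq_pos (hpos : ∀ q : ℝ[X], q ≠ 0 → 0 < ∫ x, q.eval x ^ 2 ∂μ) {q : ℝ[X]}
    (hq : q.Monic) : 0 < nrmSq μ q :=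
  hpos q hq.ne_zero

theorem eval_ne_zero_of_ae_lt (hpos : ∀ q : ℝ[X], q ≠ 0 → 0 < ∫ x, q.eval x ^ 2 ∂μ)
    (hc : ∀ᵐ x ∂μ, c < x) (hP : IsMonicOrthogonal (weightedForm hmom 1) P) (n : ℕ) :
    (P n).eval c ≠ 0 := by
  intro hroot
  have hfac : (X - C c) * (P n /ₘ (X - C c)) = P n := mul_divByMonic_eq_iff_isRoot.mpr hroot
  set Q := P n /ₘ (X - C c)
  have hQ : Q ≠ 0 := by
    rintro h
    rw [h, mul_zero] at hfac
    exact (hP.monic n).ne_zero hfac.symm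
  have hQn : Q.degree < n := hP.degree_eq n ▸
    degree_divByMonic_lt _ _ (hP.monic n).ne_zero (by rw [degree_X_sub_C]; exact zero_lt_one)
  have h := hP.apply_eq_zero_of_degree_lt hQn
  rw [← hfac, weightedForm_mul_left, weightedForm_one_apply_mul] at h
  exact (weightedForm_X_sub_C_apply_self_pos hpos hc hQ).ne' h

theorem eval_Kpoly_zero (n : ℕ) : (Kpoly μ P c n 0).eval c = Kcc μ P c n := by
  simp only [Kpoly, Kcc, eval_finsetSum, eval_mul, eval_C, Function.iterate_zero, id]
  exact sum_congr rfl fun j _ => by ring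

theorem coeff_Kpoly_zero_self (hPm : ∀ n, (P n).Monic) (hPd : ∀ n, (P n).natDegree = n)
    (n : ℕ) : (Kpoly μ P c n 0).coeff n = (P n).eval c / nrmSq μ (P n) := by
  have hlead : (P n).coeff n = 1 := by simpa [hPd n] using (hPm n).coeff_natDegree
  rw [Kpoly, finsetSum_coeff, sum_range_succ, sum_eq_zero fun k hk => ?_, zero_add]
  · rw [coeff_C_mul, Function.iterate_zero, id, hlead, mul_one]
  · rw [coeff_C_mul, coeff_eq_zero_of_natDegree_lt (by rw [hPd]; exact mem_range.mp hk), mul_zero]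

theorem weightedForm_one_apply_divByMonic {L : ℝ[X]} {n : ℕ} (hLc : L.IsRoot c)
    (hL : ∀ q : ℝ[X], q.degree < n → weightedForm hmom 1 q L = 0) {p : ℝ[X]}
    (hp : p.degree ≤ n) :
    weightedForm hmom 1 p (L /ₘ (X - C c))
      = p.eval c * weightedForm hmom 1 1 (L /ₘ (X - C c)) := by
  have hD : (X - C c) * ((p - C (p.eval c)) /ₘ (X - C c)) = p - C (p.eval c) :=
    mul_divByMonic_eq_iff_isRoot.mpr (by simp)
  have hDdeg : ((p - C (p.eval c)) /ₘ (X - C c)).degree < n :=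
    degree_divByMonic_X_sub_C_lt c ((degree_sub_le _ _).trans
      (max_le hp (degree_C_le.trans (WithBot.coe_le_coe.mpr n.zero_le))))
  calc weightedForm hmom 1 p (L /ₘ (X - C c))
      = weightedForm hmom 1 ((X - C c) * ((p - C (p.eval c)) /ₘ (X - C c)) + p.eval c • 1)
          (L /ₘ (X - C c)) := by rw [hD, ← C_mul', mul_one, sub_add_cancel]
    _ = p.eval c * weightedForm hmom 1 1 (L /ₘ (X - C c)) := by
      rw [LinearMap.map_add₂, weightedForm_mul_left, mul_divByMonic_eq_iff_isRoot.mpr hLc,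
        hL _ hDdeg, zero_add, LinearMap.map_smul₂, smul_eq_mul]

theorem divByMonic_X_sub_C_eq_C_mul_Kpoly (hpos : ∀ q : ℝ[X], q ≠ 0 → 0 < ∫ x, q.eval x ^ 2 ∂μ)
    (hP : IsMonicOrthogonal (weightedForm hmom 1) P) {L : ℝ[X]} {n : ℕ} (hLc : L.IsRoot c)
    (hL : ∀ q : ℝ[X], q.degree < n → weightedForm hmom 1 q L = 0) (hLdeg : L.degree ≤ ↑(n + 1)) :
    L /ₘ (X - C c) = C (weightedForm hmom 1 1 (L /ₘ (X - C c))) * Kpoly μ P c n 0 := by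
  refine (hP.eq_sum_Ico (weightedForm_one_anisotropic hpos)
    (degree_divByMonic_X_sub_C_lt c hLdeg) (m := 0) (by simp)).trans ?_
  rw [Kpoly, mul_sum, range_eq_Ico]
  refine sum_congr rfl fun j hj => ?_
  rw [weightedForm_one_apply_divByMonic hLc hL (hP.degree_eq j ▸
      WithBot.coe_le_coe.mpr (Nat.lt_succ_iff.mp (mem_Ico.mp hj).2)),
    weightedForm_one_apply_self, Function.iterate_zero, id, ← mul_assoc, ← C_mul]
  ring_nf

theorem christoffelDarboux (hpos : ∀ q : ℝ[X], q ≠ 0 → 0 < ∫ x, q.eval x ^ 2 ∂μ)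
    (hc : ∀ᵐ x ∂μ, c < x) (hP : IsMonicOrthogonal (weightedForm hmom 1) P) (n : ℕ) :
    (X - C c) * (C (nrmSq μ (P n)) * Kpoly μ P c n 0)
      = C ((P n).eval c) * P (n + 1) - C ((P (n + 1)).eval c) * P n := by
  set L := C ((P n).eval c) * P (n + 1) - C ((P (n + 1)).eval c) * P n with hLdef
  have hLc : L.IsRoot c := by simp [L, mul_comm]
  have hL : (X - C c) * (L /ₘ (X - C c)) = L := mul_divByMonic_eq_iff_isRoot.mpr hLc
  have hLorth : ∀ q : ℝ[X], q.degree < n → weightedForm hmom 1 q L = 0 := by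
    intro q hq
    rw [hLdef, C_mul', C_mul', map_sub, map_smul, map_smul, weightedForm_comm 1 q,
      weightedForm_comm 1 q, hP.apply_eq_zero_of_degree_lt hq,
      hP.apply_eq_zero_of_degree_lt (hq.trans (WithBot.coe_lt_coe.mpr n.lt_succ_self)),
      smul_zero, smul_zero, sub_zero]
  have hLdeg : L.degree ≤ ↑(n + 1) := by
    simp only [L, C_mul']
    refine (degree_sub_le _ _).trans (max_le ((degree_smul_le _ _).trans ?_)
      ((degree_smul_le _ _).trans ?_)) <;> rw [hP.degree_eq]
    exact WithBot.coe_le_coe.mpr n.le_succ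
  have hQ := divByMonic_X_sub_C_eq_C_mul_Kpoly hpos hP hLc hLorth hLdeg
  -- The constant is read off from the coefficient of `X ^ (n + 1)`, which is `P n (c) ≠ 0`.
  have hA : weightedForm hmom 1 1 (L /ₘ (X - C c)) = nrmSq μ (P n) := by
    have hLn : L.coeff (n + 1) = (P n).eval c := by
      have hlead : (P (n + 1)).coeff (n + 1) = 1 := by
        simpa [hP.natDegree_eq] using (hP.monic (n + 1)).coeff_natDegree
      rw [hLdef, coeff_sub, coeff_C_mul, coeff_C_mul, hlead, coeff_eq_zero_of_natDegree_lt
        (by rw [hP.natDegree_eq]; exact n.lt_succ_self), mul_one, mul_zero, sub_zero]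
    have hcoeff := congrArg (coeff · (n + 1)) hL
    rw [coeff_X_sub_C_mul, coeff_eq_zero_of_degree_lt (degree_divByMonic_X_sub_C_lt c hLdeg),
      mul_zero, sub_zero, hLn] at hcoeff
    nth_rewrite 1 [hQ] at hcoeff
    rw [coeff_C_mul, coeff_Kpoly_zero_self hP.monic hP.natDegree_eq] at hcoeff
    have hne := eval_ne_zero_of_ae_lt hpos hc hP n
    have hnrm := (nrmSq_pos hpos (hP.monic n)).ne'
    field_simp at hcoeff
    exact hcoeff
  rw [← hA, ← hQ, hL]

theorem wronskian_eq (hpos : ∀ q : ℝ[X], q ≠ 0 → 0 < ∫ x, q.eval x ^ 2 ∂μ)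
    (hc : ∀ᵐ x ∂μ, c < x) (hP : IsMonicOrthogonal (weightedForm hmom 1) P) (n : ℕ) :
    (P n).eval c * (derivative (P (n + 1))).eval c
      - (P (n + 1)).eval c * (derivative (P n)).eval c = nrmSq μ (P n) * Kcc μ P c n := by
  have h := congrArg (fun p => (derivative p).eval c) (christoffelDarboux hpos hc hP n)
  simp only [derivative_mul, derivative_sub, derivative_X, derivative_C, eval_add, eval_sub,
    eval_mul, eval_C, eval_X, sub_zero, sub_self, one_mul, zero_mul, add_zero, zero_add,
    eval_Kpoly_zero] at h
  rw [← h]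

theorem Kcc_pos (hpos : ∀ q : ℝ[X], q ≠ 0 → 0 < ∫ x, q.eval x ^ 2 ∂μ)
    (hc : ∀ᵐ x ∂μ, c < x) (hP : IsMonicOrthogonal (weightedForm hmom 1) P) (n : ℕ) :
    0 < Kcc μ P c n :=
  sum_pos (fun j _ => div_pos (pow_two_pos_of_ne_zero (eval_ne_zero_of_ae_lt hpos hc hP j))
    (nrmSq_pos hpos (hP.monic j))) nonempty_range_add_one

end OrthogonalPolynomials

-- Cramer's rule for `P (m+2) + α P (m+1) + β P m` to have a double root at `c`.
theorem eq_neg_dCoef_and_eq_eCoef (P : ℕ → ℝ[X]) (c : ℝ) (m : ℕ) {α β : ℝ}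
    (hW : (P (m + 1)).eval c * (derivative (P m)).eval c
      - (derivative (P (m + 1))).eval c * (P m).eval c ≠ 0)
    (h₀ : (P (m + 2) + C α * P (m + 1) + C β * P m).eval c = 0)
    (h₁ : (derivative (P (m + 2) + C α * P (m + 1) + C β * P m)).eval c = 0) :
    α = -dCoef P c m ∧ β = eCoef P c m := by
  simp only [derivative_add, derivative_C_mul, eval_add, eval_mul, eval_C] at h₀ h₁
  constructor
  · rw [dCoef, ← neg_div, eq_div_iff hW]
    linear_combination (derivative (P m)).eval c * h₀ - (P m).eval c * h₁
  · rw [eCoef, eq_div_iff hW]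
    linear_combination (P (m + 1)).eval c * h₁ - (derivative (P (m + 1))).eval c * h₀

section ChristoffelTransform

variable {μ : Measure ℝ} {hmom : ∀ n : ℕ, Integrable (fun x : ℝ => x ^ n) μ} {c : ℝ}
  {P P2 : ℕ → ℝ[X]}

theorem X_sub_C_sq_mul_eq (hpos : ∀ q : ℝ[X], q ≠ 0 → 0 < ∫ x, q.eval x ^ 2 ∂μ)
    (hc : ∀ᵐ x ∂μ, c < x) (hP : IsMonicOrthogonal (weightedForm hmom 1) P)
    (hP2 : IsMonicOrthogonal (weightedForm hmom ((X - C c) ^ 2)) P2) (m : ℕ) :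
    (X - C c) ^ 2 * P2 m = P (m + 2) - C (dCoef P c m) * P (m + 1) + C (eCoef P c m) * P m := by
  have hlow : ∀ j < m, weightedForm hmom 1 (P j) ((X - C c) ^ 2 * P2 m - P (m + 2)) = 0 := by
    intro j hj
    rw [map_sub, weightedForm_one_apply_mul, weightedForm_comm,
      hP2.apply_eq_zero_of_degree_lt (by rw [hP.degree_eq]; exact_mod_cast hj),
      hP.apply_eq_zero j (m + 2) (by omega), sub_zero]
  have hexp := hP.eq_sum_Ico (weightedForm_one_anisotropic hpos)
    (degree_sub_lt_of_monic (monic_X_sub_C_sq_mul c (hP2.monic m)) (hP.monic _)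
      (by rw [natDegree_X_sub_C_sq_mul c (hP2.monic m), hP2.natDegree_eq]) (hP.natDegree_eq _)) hlow
  rw [sum_Ico_succ_top (by omega), sum_Ico_succ_top le_rfl, Ico_self, sum_empty, zero_add,
    sub_eq_iff_eq_add'] at hexp
  obtain ⟨α, β, hαβ⟩ : ∃ α β, (X - C c) ^ 2 * P2 m = P (m + 2) + C α * P (m + 1) + C β * P m :=
    ⟨_, _, hexp.trans (by rw [add_comm (C _ * P m), ← add_assoc])⟩
  have hW : (P (m + 1)).eval c * (derivative (P m)).eval c
      - (derivative (P (m + 1))).eval c * (P m).eval c ≠ 0 := by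
    have hpos' := mul_pos (nrmSq_pos hpos (hP.monic m)) (Kcc_pos hpos hc hP m)
    have := wronskian_eq hpos hc hP m
    intro h
    linarith
  obtain ⟨rfl, rfl⟩ := eq_neg_dCoef_and_eq_eCoef P c m hW
    (hαβ ▸ eval_X_sub_C_sq_mul c (P2 m)) (hαβ ▸ eval_derivative_X_sub_C_sq_mul c (P2 m))
  rw [hαβ, C_neg]
  ring

theorem eCoef_eq (hpos : ∀ q : ℝ[X], q ≠ 0 → 0 < ∫ x, q.eval x ^ 2 ∂μ)
    (hc : ∀ᵐ x ∂μ, c < x) (hP : IsMonicOrthogonal (weightedForm hmom 1) P) (m : ℕ) :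
    eCoef P c m
      = nrmSq μ (P (m + 1)) * Kcc μ P c (m + 1) / (nrmSq μ (P m) * Kcc μ P c m) := by
  have h₀ := wronskian_eq hpos hc hP m
  have h₁ := wronskian_eq hpos hc hP (m + 1)
  rw [eCoef, ← neg_div_neg_eq]
  congr 1 <;> linarith

theorem nrmSq2_eq (hpos : ∀ q : ℝ[X], q ≠ 0 → 0 < ∫ x, q.eval x ^ 2 ∂μ)
    (hc : ∀ᵐ x ∂μ, c < x) (hP : IsMonicOrthogonal (weightedForm hmom 1) P)
    (hP2 : IsMonicOrthogonal (weightedForm hmom ((X - C c) ^ 2)) P2) (m : ℕ) :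
    nrmSq2 μ c (P2 m) = nrmSq μ (P (m + 1)) * Kcc μ P c (m + 1) / Kcc μ P c m := by
  have hlt : ∀ k, m < k → (P2 m).degree < k := fun k hk => by
    rw [hP2.degree_eq]; exact_mod_cast hk
  rw [← weightedForm_sq_apply_self (hmom := hmom), ← weightedForm_one_apply_mul,
    X_sub_C_sq_mul_eq hpos hc hP hP2, C_mul', C_mul', map_add, map_sub, map_smul, map_smul,
    weightedForm_comm 1 (P2 m), weightedForm_comm 1 (P2 m), weightedForm_comm 1 (P2 m),
    hP.apply_eq_zero_of_degree_lt (hlt _ (by omega)),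
    hP.apply_eq_zero_of_degree_lt (hlt _ (by omega)),
    hP.apply_eq_apply_self_of_monic (hP2.monic m) (hP2.natDegree_eq m),
    weightedForm_one_apply_self, eCoef_eq hpos hc hP, smul_zero, sub_zero, zero_add, smul_eq_mul]
  have := (nrmSq_pos hpos (hP.monic m)).ne'
  have := (Kcc_pos hpos hc hP m).ne'
  field_simp

theorem r2C_eq (hpos : ∀ q : ℝ[X], q ≠ 0 → 0 < ∫ x, q.eval x ^ 2 ∂μ)
    (hc : ∀ᵐ x ∂μ, c < x) (hP : IsMonicOrthogonal (weightedForm hmom 1) P)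
    (hP2 : IsMonicOrthogonal (weightedForm hmom ((X - C c) ^ 2)) P2) (m : ℕ) :
    r2C μ c P2 m = rC μ P (m + 1) * √(Kcc μ P c m / Kcc μ P c (m + 1)) := by
  rw [r2C, nrmSq2_eq hpos hc hP hP2, rC, mul_div_assoc,
    Real.sqrt_mul (nrmSq_pos hpos (hP.monic _)).le, ← inv_div (Kcc μ P c m), Real.sqrt_inv]
  field_simp

end ChristoffelTransform

section SobolevType

variable {μ : Measure ℝ} {hmom : ∀ n : ℕ, Integrable (fun x : ℝ => x ^ n) μ} {c M N : ℝ}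
  {P P2 S : ℕ → ℝ[X]}

theorem weightedForm_one_apply_eq_of_degree_lt
    (hS : IsMonicOrthogonal (sobolevForm hmom c M N) S) {n : ℕ} {q : ℝ[X]} (hq : q.degree < n) :
    weightedForm hmom 1 (S n) q = -(M * ((S n).eval c * q.eval c)
      + N * ((derivative (S n)).eval c * (derivative q).eval c)) := by
  have h := hS.apply_eq_zero_of_degree_lt hq
  rw [sobolevForm_apply, ipS] at h
  rw [weightedForm_apply]
  simp only [eval_one, mul_one]
  linarith

theorem weightedForm_sq_apply_eq_zero
    (hP2 : IsMonicOrthogonal (weightedForm hmom ((X - C c) ^ 2)) P2)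
    (hS : IsMonicOrthogonal (sobolevForm hmom c M N) S) {j n : ℕ} (hjn : j + 2 < n) :
    weightedForm hmom ((X - C c) ^ 2) (P2 j) (S n) = 0 := by
  rw [weightedForm_comm, ← sobolevForm_apply_X_sub_C_sq_mul (M := M) (N := N)]
  refine hS.apply_eq_zero_of_degree_lt ((degree_le_natDegree).trans_lt ?_)
  rw [natDegree_X_sub_C_sq_mul c (hP2.monic j), hP2.natDegree_eq]
  exact_mod_cast hjn

theorem weightedForm_sq_apply_add_two
    (hP2 : IsMonicOrthogonal (weightedForm hmom ((X - C c) ^ 2)) P2)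
    (hS : IsMonicOrthogonal (sobolevForm hmom c M N) S) (k : ℕ) :
    weightedForm hmom ((X - C c) ^ 2) (P2 k) (S (k + 2)) = ipS μ c M N (S (k + 2)) (S (k + 2)) := by
  rw [weightedForm_comm, ← sobolevForm_apply_X_sub_C_sq_mul (M := M) (N := N),
    hS.apply_eq_apply_self_of_monic (monic_X_sub_C_sq_mul c (hP2.monic k))
      (by rw [natDegree_X_sub_C_sq_mul c (hP2.monic k), hP2.natDegree_eq]),
    sobolevForm_apply]

theorem weightedForm_sq_apply_add_one (hpos : ∀ q : ℝ[X], q ≠ 0 → 0 < ∫ x, q.eval x ^ 2 ∂μ)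
    (hc : ∀ᵐ x ∂μ, c < x) (hP : IsMonicOrthogonal (weightedForm hmom 1) P)
    (hP2 : IsMonicOrthogonal (weightedForm hmom ((X - C c) ^ 2)) P2)
    (hS : IsMonicOrthogonal (sobolevForm hmom c M N) S) (k : ℕ) :
    weightedForm hmom ((X - C c) ^ 2) (P2 (k + 1)) (S (k + 2))
      = -(dCoef P c (k + 1) * nrmSq μ (P (k + 2)))
        - eCoef P c (k + 1) * (M * ((S (k + 2)).eval c * (P (k + 1)).eval c)
          + N * ((derivative (S (k + 2))).eval c * (derivative (P (k + 1))).eval c)) := by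
  rw [weightedForm_comm, ← weightedForm_one_apply_mul, X_sub_C_sq_mul_eq hpos hc hP hP2, C_mul',
    C_mul', map_add, map_sub, map_smul, map_smul, weightedForm_comm 1 (S _),
    hP.apply_eq_zero_of_degree_lt (by rw [hS.degree_eq]; exact_mod_cast (by omega : k + 2 < k + 3)),
    weightedForm_comm 1 (S _), hP.apply_eq_apply_self_of_monic (hS.monic _) (hS.natDegree_eq _),
    weightedForm_one_apply_self, weightedForm_one_apply_eq_of_degree_lt hS
      (by rw [hP.degree_eq]; exact_mod_cast (by omega : k + 1 < k + 2)), smul_eq_mul, smul_eq_mul]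
  ring

end SobolevType

section ConnectionCoefficients

variable {μ : Measure ℝ} {hmom : ∀ n : ℕ, Integrable (fun x : ℝ => x ^ n) μ} {c M N : ℝ}
  {P P2 S : ℕ → ℝ[X]}

theorem gamC_eq_weightedForm (j n : ℕ) :
    gamC μ c M N S P2 j n
      = tC μ c M N S n * r2C μ c P2 j * weightedForm hmom ((X - C c) ^ 2) (P2 j) (S n) := by
  rw [weightedForm_apply, gamC, ← integral_const_mul]
  congr 1 with x
  simp only [sN, onP2, eval_mul, eval_C, eval_pow, eval_sub, eval_X]
  ring

theorem sN_eq_sum_gamC (hpos : ∀ q : ℝ[X], q ≠ 0 → 0 < ∫ x, q.eval x ^ 2 ∂μ)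
    (hP2 : IsMonicOrthogonal (weightedForm hmom ((X - C c) ^ 2)) P2)
    (hS : IsMonicOrthogonal (sobolevForm hmom c M N) S) (k : ℕ) :
    sN μ c M N S (k + 2)
      = ∑ j ∈ Ico k (k + 3), C (gamC μ c M N S P2 j (k + 2)) * onP2 μ c P2 j := by
  have hexp := hP2.eq_sum_Ico (weightedForm_sq_anisotropic hpos c) (m := k) (n := k + 3)
    (q := S (k + 2)) (by rw [hS.degree_eq]; exact_mod_cast (k + 2).lt_succ_self)
    (fun j hj => weightedForm_sq_apply_eq_zero hP2 hS (by omega))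
  rw [sN]
  nth_rewrite 1 [hexp]
  rw [mul_sum]
  refine sum_congr rfl fun j _ => ?_
  have ha : 0 ≤ nrmSq2 μ c (P2 j) := integral_nonneg fun x => by positivity
  have hsq : 1 / √(nrmSq2 μ c (P2 j)) * (1 / √(nrmSq2 μ c (P2 j))) = 1 / nrmSq2 μ c (P2 j) := by
    rw [one_div_mul_one_div, Real.mul_self_sqrt ha]
  rw [gamC_eq_weightedForm (hmom := hmom), onP2, r2C, weightedForm_sq_apply_self,
    ← mul_assoc, ← mul_assoc, ← C_mul, ← C_mul]
  congr 2
  linear_combination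
    -(tC μ c M N S (k + 2) * weightedForm hmom ((X - C c) ^ 2) (P2 j) (S (k + 2))) * hsq

theorem gamC_self (hP2 : IsMonicOrthogonal (weightedForm hmom ((X - C c) ^ 2)) P2)
    (hS : IsMonicOrthogonal (sobolevForm hmom c M N) S) (n : ℕ) :
    gamC μ c M N S P2 n n = tC μ c M N S n / r2C μ c P2 n := by
  rw [gamC_eq_weightedForm (hmom := hmom),
    hP2.apply_eq_apply_self_of_monic (hS.monic n) (hS.natDegree_eq n), weightedForm_sq_apply_self,
    r2C, div_div_eq_mul_div, div_one]
  linear_combination tC μ c M N S n * Real.div_sqrt (x := nrmSq2 μ c (P2 n))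

theorem gamC_add_two (hpos : ∀ q : ℝ[X], q ≠ 0 → 0 < ∫ x, q.eval x ^ 2 ∂μ)
    (hc : ∀ᵐ x ∂μ, c < x) (hP : IsMonicOrthogonal (weightedForm hmom 1) P)
    (hP2 : IsMonicOrthogonal (weightedForm hmom ((X - C c) ^ 2)) P2)
    (hS : IsMonicOrthogonal (sobolevForm hmom c M N) S) (k : ℕ) :
    gamC μ c M N S P2 k (k + 2)
      = rC μ P (k + 1) / tC μ c M N S (k + 2) * √(Kcc μ P c k / Kcc μ P c (k + 1)) := by
  rw [gamC_eq_weightedForm (hmom := hmom), weightedForm_sq_apply_add_two hP2 hS,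
    r2C_eq hpos hc hP hP2, tC, div_div_eq_mul_div, div_one]
  linear_combination rC μ P (k + 1) * √(Kcc μ P c k / Kcc μ P c (k + 1))
    * Real.div_sqrt (x := ipS μ c M N (S (k + 2)) (S (k + 2)))

theorem gamC_add_one (hpos : ∀ q : ℝ[X], q ≠ 0 → 0 < ∫ x, q.eval x ^ 2 ∂μ)
    (hc : ∀ᵐ x ∂μ, c < x) (hP : IsMonicOrthogonal (weightedForm hmom 1) P)
    (hP2 : IsMonicOrthogonal (weightedForm hmom ((X - C c) ^ 2)) P2)
    (hS : IsMonicOrthogonal (sobolevForm hmom c M N) S) (k : ℕ) :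
    gamC μ c M N S P2 (k + 1) (k + 2)
      = -√(Kcc μ P c (k + 1) / Kcc μ P c (k + 2))
        * (dCoef P c (k + 1) * tC μ c M N S (k + 2) / rC μ P (k + 2)
          + eCoef P c (k + 1) * (rC μ P (k + 2) / rC μ P (k + 1))
            * (M * (sN μ c M N S (k + 2)).eval c * (onP μ P (k + 1)).eval c
              + N * (derivative (sN μ c M N S (k + 2))).eval c
                * (derivative (onP μ P (k + 1))).eval c)) := by
  rw [gamC_eq_weightedForm (hmom := hmom), weightedForm_sq_apply_add_one hpos hc hP hP2 hS,
    r2C_eq hpos hc hP hP2]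
  simp only [sN, onP, eval_mul, eval_C, derivative_C_mul]
  have hr : rC μ P (k + 1) ≠ 0 := by
    rw [rC]; exact one_div_ne_zero (Real.sqrt_pos.mpr (nrmSq_pos hpos (hP.monic _))).ne'
  have ha : √(nrmSq μ (P (k + 2))) ≠ 0 := (Real.sqrt_pos.mpr (nrmSq_pos hpos (hP.monic _))).ne'
  rw [show rC μ P (k + 2) = 1 / √(nrmSq μ (P (k + 2))) from rfl]
  field_simp
  rw [Real.sq_sqrt (nrmSq_pos hpos (hP.monic _)).le]
  ring

theorem div_r2C_eq (hpos : ∀ q : ℝ[X], q ≠ 0 → 0 < ∫ x, q.eval x ^ 2 ∂μ)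
    (hc : ∀ᵐ x ∂μ, c < x) (hP : IsMonicOrthogonal (weightedForm hmom 1) P)
    (hP2 : IsMonicOrthogonal (weightedForm hmom ((X - C c) ^ 2)) P2) (a : ℝ) (n : ℕ) :
    a / r2C μ c P2 n = a / rC μ P (n + 1) * √(Kcc μ P c (n + 1) / Kcc μ P c n) := by
  rw [r2C_eq hpos hc hP hP2, div_mul_eq_div_div, div_eq_mul_inv (a / _), ← Real.sqrt_inv, inv_div]

end ConnectionCoefficients

theorem stmt8_general
    (μ : Measure ℝ)
    (hmom : ∀ n : ℕ, Integrable (fun x : ℝ => x ^ n) μ)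
    (hpos : ∀ q : Polynomial ℝ, q ≠ 0 → 0 < ∫ x, q.eval x ^ 2 ∂μ)
    (c : ℝ) (hc : ∀ᵐ x ∂μ, c < x)
    (P : ℕ → Polynomial ℝ) (hPm : ∀ n, (P n).Monic) (hPd : ∀ n, (P n).natDegree = n)
    (hPo : ∀ m n, m ≠ n → ∫ x, (P m).eval x * (P n).eval x ∂μ = 0)
    (P2 : ℕ → Polynomial ℝ) (hP2m : ∀ n, (P2 n).Monic) (hP2d : ∀ n, (P2 n).natDegree = n)
    (hP2o : ∀ m n, m ≠ n → ∫ x, (P2 m).eval x * (P2 n).eval x * (x - c) ^ 2 ∂μ = 0)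
    (M N : ℝ)
    (S : ℕ → Polynomial ℝ) (hSm : ∀ n, (S n).Monic) (hSd : ∀ n, (S n).natDegree = n)
    (hSo : ∀ m n, m ≠ n → ipS μ c M N (S m) (S n) = 0) :
    ∀ n : ℕ, 2 ≤ n →
      sN μ c M N S n
        = C (tC μ c M N S n / r2C μ c P2 n) * onP2 μ c P2 n
          + C (-(Real.sqrt (Kcc μ P c (n - 1) / Kcc μ P c n))
                * (dCoef P c (n - 1) * tC μ c M N S n / rC μ P n
                  + eCoef P c (n - 1) * (rC μ P n / rC μ P (n - 1))
                    * (M * (sN μ c M N S n).eval c * (onP μ P (n - 1)).eval c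
                      + N * (derivative (sN μ c M N S n)).eval c
                          * (derivative (onP μ P (n - 1))).eval c)))
              * onP2 μ c P2 (n - 1)
          + C ((rC μ P (n - 1) / tC μ c M N S n)
                * Real.sqrt (Kcc μ P c (n - 2) / Kcc μ P c (n - 1)))
              * onP2 μ c P2 (n - 2)
      ∧ tC μ c M N S n / r2C μ c P2 n
          = (tC μ c M N S n / rC μ P (n + 1))
              * Real.sqrt (Kcc μ P c (n + 1) / Kcc μ P c n) := by
  have hP : IsMonicOrthogonal (weightedForm hmom 1) P :=
    ⟨hPm, hPd, fun m n h => by simpa [weightedForm_apply] using hPo m n h⟩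
  have hP2 : IsMonicOrthogonal (weightedForm hmom ((X - C c) ^ 2)) P2 :=
    ⟨hP2m, hP2d, fun m n h => by simpa [weightedForm_apply] using hP2o m n h⟩
  have hS : IsMonicOrthogonal (sobolevForm hmom c M N) S :=
    ⟨hSm, hSd, fun m n h => by rw [sobolevForm_apply]; exact hSo m n h⟩
  intro n hn
  obtain ⟨k, rfl⟩ := Nat.exists_eq_add_of_le' hn
  refine ⟨?_, div_r2C_eq hpos hc hP hP2 _ _⟩
  conv_lhs => rw [sN_eq_sum_gamC hpos hP2 hS]
  rw [sum_Ico_succ_top (by omega), sum_Ico_succ_top (by omega),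
    sum_Ico_succ_top le_rfl, Ico_self, sum_empty, zero_add, gamC_self hP2 hS,
    gamC_add_one hpos hc hP hP2 hS, gamC_add_two hpos hc hP hP2 hS,
    show k + 2 - 1 = k + 1 from rfl, show k + 2 - 2 = k from rfl]
  ring

/-- for every `n ≥ 2`,
`s_n^{M,N} = γ_{n,n} p_n^{[2]} + γ_{n-1,n} p_{n-1}^{[2]} + γ_{n-2,n} p_{n-2}^{[2]}`, with
`γ_{n,n} = t_n/r_n^{[2]} = (t_n/r_{n+1})·(K_{n+1}(c,c)/K_n(c,c))^{1/2}`,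
`γ_{n-1,n} = -(K_{n-1}(c,c)/K_n(c,c))^{1/2}·(d_{n-1} t_n/r_n + e_{n-1}(r_n/r_{n-1})·
  [M s_n^{M,N}(c) p_{n-1}(c) + N (s_n^{M,N})'(c) p_{n-1}'(c)])`, and
`γ_{n-2,n} = (r_{n-1}/t_n)·(K_{n-2}(c,c)/K_{n-1}(c,c))^{1/2}`. -/
theorem stmt8
    (μ : Measure ℝ) [IsFiniteMeasure μ]
    (hmom : ∀ n : ℕ, Integrable (fun x : ℝ => x ^ n) μ)
    (hpos : ∀ q : Polynomial ℝ, q ≠ 0 → 0 < ∫ x, q.eval x ^ 2 ∂μ)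
    (c : ℝ) (hc : ∀ᵐ x ∂μ, c < x)
    (P : ℕ → Polynomial ℝ) (hPm : ∀ n, (P n).Monic) (hPd : ∀ n, (P n).natDegree = n)
    (hPo : ∀ m n, m ≠ n → ∫ x, (P m).eval x * (P n).eval x ∂μ = 0)
    (P2 : ℕ → Polynomial ℝ) (hP2m : ∀ n, (P2 n).Monic) (hP2d : ∀ n, (P2 n).natDegree = n)
    (hP2o : ∀ m n, m ≠ n → ∫ x, (P2 m).eval x * (P2 n).eval x * (x - c) ^ 2 ∂μ = 0)
    (M N : ℝ) (hM : 0 ≤ M) (hN : 0 ≤ N)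
    (S : ℕ → Polynomial ℝ) (hSm : ∀ n, (S n).Monic) (hSd : ∀ n, (S n).natDegree = n)
    (hSo : ∀ m n, m ≠ n → ipS μ c M N (S m) (S n) = 0) :
    ∀ n : ℕ, 2 ≤ n →
      sN μ c M N S n
        = C (tC μ c M N S n / r2C μ c P2 n) * onP2 μ c P2 n
          + C (-(Real.sqrt (Kcc μ P c (n - 1) / Kcc μ P c n))
                * (dCoef P c (n - 1) * tC μ c M N S n / rC μ P n
                  + eCoef P c (n - 1) * (rC μ P n / rC μ P (n - 1))
                    * (M * (sN μ c M N S n).eval c * (onP μ P (n - 1)).eval c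
                      + N * (derivative (sN μ c M N S n)).eval c
                          * (derivative (onP μ P (n - 1))).eval c)))
              * onP2 μ c P2 (n - 1)
          + C ((rC μ P (n - 1) / tC μ c M N S n)
                * Real.sqrt (Kcc μ P c (n - 2) / Kcc μ P c (n - 1)))
              * onP2 μ c P2 (n - 2)
      ∧ tC μ c M N S n / r2C μ c P2 n
          = (tC μ c M N S n / rC μ P (n + 1))
              * Real.sqrt (Kcc μ P c (n + 1) / Kcc μ P c n) :=
  stmt8_general μ hmom hpos c hc P hPm hPd hPo P2 hP2m hP2d hP2o M N S hSm hSd hSo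
end

section
/- The monic sequence {P_n^{[2]}} satisfies the three term recurrence relation x·P_n^{[2]}(x) = P_{n+1}^{[2]}(x) + κ_n P_n^{[2]}(x) + τ_n P_{n−1}^{[2]}(x) for every n ≥ 1, where κ_n = (β_n + γ_n·d_{n−1}/e_{n−1})·e_n·(r_n^{[2]}/r_n)² − d_n·(r_n^{[2]}/r_{n+1})² and τ_n = (r_{n−1}^{[2]}/r_{n+1})²·(K_{n+1}(c,c)/K_n(c,c)) > 0. -/
open MeasureTheory Polynomial

/-- Recurrence coefficient `κ_n` of the monic 3TRR for `P_n^{[2]}`. -/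
noncomputable def kappaC (μ : Measure ℝ) (c : ℝ) (P P2 : ℕ → Polynomial ℝ)
    (β γ : ℕ → ℝ) (n : ℕ) : ℝ :=
  (β n + γ n * dCoef P c (n - 1) / eCoef P c (n - 1)) * eCoef P c n
      * (r2C μ c P2 n / rC μ P n) ^ 2
    - dCoef P c n * (r2C μ c P2 n / rC μ P (n + 1)) ^ 2

/-!
Multiplication by `(x - c)²` sends `P_k^{[2]}` to `P_{k+2} - d_k P_{k+1} + e_k P_k`: the difference
`(x - c)² P_k^{[2]} - P_{k+2}` has degree `≤ k + 1` and is `μ`-orthogonal to every polynomial of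
degree `< k`, so it is a combination of `P_{k+1}` and `P_k`, whose coefficients are forced by the
double zero at `c` (Cramer's rule). The determinant of that system is the Wronskian
`P_{k+1}'(c) P_k(c) - P_k'(c) P_{k+1}(c)`, which the confluent Christoffel–Darboux formula
identifies with `K_k(c,c) ‖P_k‖² > 0`; in particular `e_k` is a ratio of two such Wronskians.

Pairing the connection formula with `P_k^{[2]}`, `P_{k+1}^{[2]}` and `x P_{k+1}^{[2]}` gives
`‖P_k^{[2]}‖²_{[2]} = e_k ‖P_k‖²` and the diagonal entries `⟨x P_n^{[2]}, P_n^{[2]}⟩_{[2]}`.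
Any monic orthogonal sequence satisfies
`x Q_{n+1} = Q_{n+2} + (⟨x Q_{n+1}, Q_{n+1}⟩ / ‖Q_{n+1}‖²) Q_{n+1} + (‖Q_{n+1}‖² / ‖Q_n‖²) Q_n`
(both sides are monic of degree `n + 2` and pair equally with `Q_0, …, Q_{n+1}`), and for
`Q = P^{[2]}` these two ratios are `κ_n` and `τ_n`.
-/

open Finset

theorem Polynomial.IsMonicOfDegree.coeff_self {R : Type*} [Semiring R] {p : R[X]} {n : ℕ}
    (hp : IsMonicOfDegree p n) : p.coeff n = 1 :=
  hp.natDegree_eq ▸ hp.monic.coeff_natDegree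

theorem LinearMap.map_C_mul {R : Type*} [CommSemiring R] (L : R[X] →ₗ[R] R) (a : R) (p : R[X]) :
    L (C a * p) = a * L p := by
  rw [C_mul', map_smul, smul_eq_mul]

section MonicBasis

variable {R : Type*} [Ring R] {Q : ℕ → R[X]}

theorem exists_eq_sum_C_mul_of_natDegree_le (hQ : ∀ n, IsMonicOfDegree (Q n) n) {N : ℕ}
    {p : R[X]} (hp : p.natDegree ≤ N) :
    ∃ f : ℕ → R, p = ∑ j ∈ range (N + 1), C (f j) * Q j := by
  induction N generalizing p with
  | zero =>
    refine ⟨fun _ => p.coeff 0, ?_⟩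
    rw [sum_range_one, isMonicOfDegree_zero_iff.mp (hQ 0), mul_one]
    exact eq_C_of_natDegree_le_zero hp
  | succ N ih =>
    set a := p.coeff (N + 1)
    have hlow : (p - C a * Q (N + 1)).natDegree ≤ N := by
      refine natDegree_le_iff_coeff_eq_zero.mpr fun m hm => ?_
      rw [coeff_sub, coeff_C_mul]
      obtain rfl | hm := (Nat.succ_le_of_lt hm).eq_or_lt
      · rw [(hQ _).coeff_self, mul_one, sub_self]
      · rw [coeff_eq_zero_of_natDegree_lt (hp.trans_lt hm),
          coeff_eq_zero_of_natDegree_lt ((hQ _).natDegree_eq ▸ hm), mul_zero, sub_zero]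
    obtain ⟨f, hf⟩ := ih hlow
    refine ⟨Function.update f (N + 1) a, ?_⟩
    rw [sum_range_succ, Function.update_self, ← sub_eq_iff_eq_add, hf]
    refine sum_congr rfl fun j hj => ?_
    rw [Function.update_of_ne (mem_range.mp hj).ne]

theorem coeff_sum_C_mul (hQ : ∀ n, IsMonicOfDegree (Q n) n) (f : ℕ → R) (N : ℕ) :
    (∑ j ∈ range (N + 1), C (f j) * Q j).coeff N = f N := by
  rw [finsetSum_coeff, sum_range_succ, coeff_C_mul, (hQ N).coeff_self, mul_one,
    sum_eq_zero, zero_add]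
  intro j hj
  rw [coeff_C_mul, coeff_eq_zero_of_natDegree_lt
    (by rw [(hQ j).natDegree_eq]; exact mem_range.mp hj), mul_zero]

end MonicBasis

structure IsMonicOrthogonal_s9 {K : Type*} [Field K] (L : K[X] →ₗ[K] K) (Q : ℕ → K[X]) :
    Prop where
  isMonicOfDegree : ∀ n, IsMonicOfDegree (Q n) n
  orthogonal : ∀ m n, m ≠ n → L (Q m * Q n) = 0

namespace IsMonicOrthogonal_s9

variable {K : Type*} [Field K] {L : K[X] →ₗ[K] K} {Q : ℕ → K[X]}

theorem isMonicOfDegree_X_mul (hQ : IsMonicOrthogonal_s9 L Q) (n : ℕ) :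
    IsMonicOfDegree (X * Q n) (n + 1) := by
  simpa [add_comm] using (isMonicOfDegree_X (R := K)).mul (hQ.isMonicOfDegree n)

theorem apply_sum_mul (hQ : IsMonicOrthogonal_s9 L Q) (f : ℕ → K) {N i : ℕ} (hi : i ≤ N) :
    L ((∑ j ∈ range (N + 1), C (f j) * Q j) * Q i) = f i * L (Q i ^ 2) := by
  rw [sum_mul, map_sum, sum_eq_single i]
  · rw [mul_assoc, L.map_C_mul, sq]
  · intro j _ hji
    rw [mul_assoc, L.map_C_mul, hQ.orthogonal j i hji, mul_zero]
  · exact fun h => absurd (mem_range.mpr (Nat.lt_succ_of_le hi)) h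

theorem eq_zero_of_apply_sum_mul_eq_zero (hQ : IsMonicOrthogonal_s9 L Q)
    (hL : ∀ n, L (Q n ^ 2) ≠ 0) (f : ℕ → K) {N i : ℕ} (hi : i ≤ N)
    (h : L ((∑ j ∈ range (N + 1), C (f j) * Q j) * Q i) = 0) : f i = 0 :=
  (mul_eq_zero.mp ((hQ.apply_sum_mul f hi).symm.trans h)).resolve_right (hL i)

theorem apply_mul_eq_coeff_mul (hQ : IsMonicOrthogonal_s9 L Q) {n : ℕ} {p : K[X]}
    (hp : p.natDegree ≤ n) : L (p * Q n) = p.coeff n * L (Q n ^ 2) := by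
  obtain ⟨f, rfl⟩ := exists_eq_sum_C_mul_of_natDegree_le hQ.isMonicOfDegree hp
  rw [hQ.apply_sum_mul f le_rfl, coeff_sum_C_mul hQ.isMonicOfDegree]

theorem apply_mul_eq_zero_of_natDegree_lt (hQ : IsMonicOrthogonal_s9 L Q) {n : ℕ} {p : K[X]}
    (hp : p.natDegree < n) : L (p * Q n) = 0 := by
  rw [hQ.apply_mul_eq_coeff_mul hp.le, coeff_eq_zero_of_natDegree_lt hp, zero_mul]

theorem apply_mul_eq_of_isMonicOfDegree (hQ : IsMonicOrthogonal_s9 L Q) {n : ℕ} {p : K[X]}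
    (hp : IsMonicOfDegree p n) : L (p * Q n) = L (Q n ^ 2) := by
  rw [hQ.apply_mul_eq_coeff_mul hp.natDegree_eq.le, hp.coeff_self, one_mul]

theorem eq_zero_of_forall_apply_mul_eq_zero (hQ : IsMonicOrthogonal_s9 L Q)
    (hL : ∀ n, L (Q n ^ 2) ≠ 0) {N : ℕ} {p : K[X]} (hp : p.natDegree ≤ N)
    (h : ∀ i ≤ N, L (p * Q i) = 0) : p = 0 := by
  obtain ⟨f, rfl⟩ := exists_eq_sum_C_mul_of_natDegree_le hQ.isMonicOfDegree hp
  refine sum_eq_zero fun i hi => ?_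
  have hi : i ≤ N := Nat.lt_succ_iff.mp (mem_range.mp hi)
  rw [hQ.eq_zero_of_apply_sum_mul_eq_zero hL f hi (h i hi), C_0, zero_mul]

theorem exists_eq_C_mul_add_C_mul (hQ : IsMonicOrthogonal_s9 L Q) (hL : ∀ n, L (Q n ^ 2) ≠ 0)
    {k : ℕ} {p : K[X]} (hp : p.natDegree ≤ k + 1) (h : ∀ i < k, L (p * Q i) = 0) :
    ∃ a b : K, p = C a * Q (k + 1) + C b * Q k := by
  obtain ⟨f, rfl⟩ := exists_eq_sum_C_mul_of_natDegree_le hQ.isMonicOfDegree hp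
  refine ⟨f (k + 1), f k, ?_⟩
  rw [sum_range_succ, sum_range_succ, sum_eq_zero, zero_add, add_comm]
  intro i hi
  have hi : i < k := mem_range.mp hi
  rw [hQ.eq_zero_of_apply_sum_mul_eq_zero hL f (by omega) (h i hi), C_0, zero_mul]

theorem apply_sq_succ_eq_mul (hQ : IsMonicOrthogonal_s9 L Q) {n : ℕ} {b g : K}
    (h : X * Q (n + 1) = Q (n + 2) + C b * Q (n + 1) + C g * Q n) :
    L (Q (n + 1) ^ 2) = g * L (Q n ^ 2) := by
  have hpair := congrArg (fun p => L (p * Q n)) h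
  have hX : L (X * Q (n + 1) * Q n) = L (Q (n + 1) ^ 2) := by
    rw [mul_right_comm, hQ.apply_mul_eq_of_isMonicOfDegree (hQ.isMonicOfDegree_X_mul n)]
  simp only [add_mul, map_add, mul_assoc (C _), L.map_C_mul, hQ.orthogonal (n + 2) n (by omega),
    hQ.orthogonal (n + 1) n (by omega), hX] at hpair
  simpa [sq] using hpair

theorem three_term_recurrence (hQ : IsMonicOrthogonal_s9 L Q) (hL : ∀ n, L (Q n ^ 2) ≠ 0)
    (n : ℕ) :
    X * Q (n + 1) = Q (n + 2) + C (L (X * Q (n + 1) * Q (n + 1)) / L (Q (n + 1) ^ 2)) * Q (n + 1)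
      + C (L (Q (n + 1) ^ 2) / L (Q n ^ 2)) * Q n := by
  set a := L (X * Q (n + 1) * Q (n + 1)) / L (Q (n + 1) ^ 2)
  set b := L (Q (n + 1) ^ 2) / L (Q n ^ 2)
  have hrhs : IsMonicOfDegree (Q (n + 2) + C a * Q (n + 1) + C b * Q n) (n + 2) :=
    ((hQ.isMonicOfDegree _).add_right ((natDegree_C_mul_le _ _).trans_lt
      (by rw [(hQ.isMonicOfDegree _).natDegree_eq]; omega))).add_right
      ((natDegree_C_mul_le _ _).trans_lt (by rw [(hQ.isMonicOfDegree _).natDegree_eq]; omega))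
  rw [← sub_eq_zero]
  refine hQ.eq_zero_of_forall_apply_mul_eq_zero hL
    (Nat.lt_succ_iff.mp ((hQ.isMonicOfDegree_X_mul _).natDegree_sub_lt (by omega) hrhs))
    fun i hi => ?_
  have hX : L (X * Q (n + 1) * Q i) = L (X * Q i * Q (n + 1)) := by ring_nf
  simp only [sub_mul, add_mul, map_sub, map_add, mul_assoc (C _), L.map_C_mul]
  rcases (by omega : i < n ∨ i = n ∨ i = n + 1) with hi | rfl | rfl
  · rw [hX, hQ.apply_mul_eq_zero_of_natDegree_lt
        (by rw [(hQ.isMonicOfDegree_X_mul i).natDegree_eq]; omega),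
      hQ.orthogonal (n + 2) i (by omega), hQ.orthogonal (n + 1) i (by omega),
      hQ.orthogonal n i (by omega)]
    ring
  · rw [hX, hQ.apply_mul_eq_of_isMonicOfDegree (hQ.isMonicOfDegree_X_mul i),
      hQ.orthogonal (i + 2) i (by omega), hQ.orthogonal (i + 1) i (by omega), ← sq,
      div_mul_cancel₀ _ (hL i)]
    ring
  · rw [hQ.orthogonal (n + 2) (n + 1) (by omega), hQ.orthogonal n (n + 1) (by omega), ← sq,
      div_mul_cancel₀ _ (hL _)]
    ring

end IsMonicOrthogonal_s9

section Wronskian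

variable {K : Type*} [Field K]

noncomputable def wronskianAt (P : ℕ → K[X]) (c : K) (k : ℕ) : K :=
  (derivative (P (k + 1))).eval c * (P k).eval c - (derivative (P k)).eval c * (P (k + 1)).eval c

noncomputable def kernelDiag (L : K[X] →ₗ[K] K) (P : ℕ → K[X]) (c : K) (n : ℕ) : K :=
  ∑ j ∈ range (n + 1), (P j).eval c ^ 2 / L (P j ^ 2)

theorem kernelDiag_succ (L : K[X] →ₗ[K] K) (P : ℕ → K[X]) (c : K) (n : ℕ) :
    kernelDiag L P c (n + 1) = kernelDiag L P c n + (P (n + 1)).eval c ^ 2 / L (P (n + 1) ^ 2) :=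
  sum_range_succ _ _

theorem wronskianAt_succ {P : ℕ → K[X]} {k : ℕ} {b g : K}
    (h : X * P (k + 1) = P (k + 2) + C b * P (k + 1) + C g * P k) (c : K) :
    wronskianAt P c (k + 1) = (P (k + 1)).eval c ^ 2 + g * wronskianAt P c k := by
  have h0 := congrArg (eval c) h
  have h1 := congrArg (fun p => (derivative p).eval c) h
  simp only [eval_mul, eval_add, eval_X, eval_C, derivative_mul, derivative_add, derivative_X,
    derivative_C, zero_mul, zero_add, one_mul] at h0 h1
  unfold wronskianAt
  linear_combination (derivative (P (k + 1))).eval c * h0 - (P (k + 1)).eval c * h1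

theorem wronskianAt_eq_kernelDiag_mul {L : K[X] →ₗ[K] K} {P : ℕ → K[X]} {β γ : ℕ → K}
    (hP : IsMonicOrthogonal_s9 L P) (hL : ∀ n, L (P n ^ 2) ≠ 0)
    (hrec : ∀ n, X * P (n + 1) = P (n + 2) + C (β (n + 1)) * P (n + 1) + C (γ (n + 1)) * P n)
    (c : K) (k : ℕ) : wronskianAt P c k = kernelDiag L P c k * L (P k ^ 2) := by
  induction k with
  | zero =>
    have hP0 := isMonicOfDegree_zero_iff.mp (hP.isMonicOfDegree 0)
    obtain ⟨r, hP1⟩ := isMonicOfDegree_one_iff.mp (hP.isMonicOfDegree 1)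
    have hL0 := hL 0
    simp only [hP0, one_pow] at hL0
    simp [wronskianAt, kernelDiag, hP0, hP1, hL0]
  | succ k ih =>
    rw [wronskianAt_succ (hrec k), ih, kernelDiag_succ, add_mul, div_mul_cancel₀ _ (hL _),
      hP.apply_sq_succ_eq_mul (hrec k)]
    ring

end Wronskian

noncomputable def christoffel {K : Type*} [Field K] (L : K[X] →ₗ[K] K) (c : K) (k : ℕ) :
    K[X] →ₗ[K] K :=
  L ∘ₗ LinearMap.mulLeft K ((X - C c) ^ k)

@[simp]
theorem christoffel_apply {K : Type*} [Field K] (L : K[X] →ₗ[K] K) (c : K) (k : ℕ)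
    (p : K[X]) :
    christoffel L c k p = L ((X - C c) ^ k * p) :=
  rfl

section Christoffel

variable {L : ℝ[X] →ₗ[ℝ] ℝ} {P P2 : ℕ → ℝ[X]} {β γ : ℕ → ℝ} {c : ℝ}

theorem kernelDiag_pos (hP : IsMonicOrthogonal_s9 L P) (hL : ∀ n, 0 < L (P n ^ 2)) (n : ℕ) :
    0 < kernelDiag L P c n := by
  refine sum_pos' (fun j _ => div_nonneg (sq_nonneg _) (hL j).le) ⟨0, by simp, ?_⟩
  have hL0 := hL 0
  rw [isMonicOfDegree_zero_iff.mp (hP.isMonicOfDegree 0)] at hL0 ⊢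
  simpa using hL0

theorem wronskianAt_pos (hP : IsMonicOrthogonal_s9 L P) (hL : ∀ n, 0 < L (P n ^ 2))
    (hrec : ∀ n, X * P (n + 1) = P (n + 2) + C (β (n + 1)) * P (n + 1) + C (γ (n + 1)) * P n)
    (k : ℕ) : 0 < wronskianAt P c k := by
  rw [wronskianAt_eq_kernelDiag_mul hP (fun n => (hL n).ne') hrec]
  exact mul_pos (kernelDiag_pos hP hL k) (hL k)

theorem eCoef_eq_div (P : ℕ → ℝ[X]) (c : ℝ) (k : ℕ) :
    eCoef P c k = wronskianAt P c (k + 1) / wronskianAt P c k := by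
  rw [eCoef, wronskianAt, wronskianAt, ← neg_div_neg_eq]
  ring_nf

theorem eCoef_pos (hP : IsMonicOrthogonal_s9 L P) (hL : ∀ n, 0 < L (P n ^ 2))
    (hrec : ∀ n, X * P (n + 1) = P (n + 2) + C (β (n + 1)) * P (n + 1) + C (γ (n + 1)) * P n)
    (k : ℕ) : 0 < eCoef P c k := by
  rw [eCoef_eq_div]
  exact div_pos (wronskianAt_pos hP hL hrec _) (wronskianAt_pos hP hL hrec k)

theorem eq_neg_dCoef_and_eq_eCoef_s9 {a b : ℝ} {k : ℕ} (hW : wronskianAt P c k ≠ 0)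
    (h0 : (P (k + 2) + C a * P (k + 1) + C b * P k).eval c = 0)
    (h1 : (derivative (P (k + 2) + C a * P (k + 1) + C b * P k)).eval c = 0) :
    a = -dCoef P c k ∧ b = eCoef P c k := by
  simp only [eval_add, eval_mul, eval_C, derivative_add, derivative_C_mul] at h0 h1
  have hden : (P (k + 1)).eval c * (derivative (P k)).eval c
      - (derivative (P (k + 1))).eval c * (P k).eval c ≠ 0 := by
    contrapose! hW
    unfold wronskianAt
    linear_combination -hW
  constructor
  · rw [dCoef, ← neg_div, eq_div_iff hden]
    linear_combination (derivative (P k)).eval c * h0 - (P k).eval c * h1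
  · rw [eCoef, eq_div_iff hden]
    linear_combination (P (k + 1)).eval c * h1 - (derivative (P (k + 1))).eval c * h0

theorem sq_mul_eq_connection (hP : IsMonicOrthogonal_s9 L P) (hL : ∀ n, 0 < L (P n ^ 2))
    (hrec : ∀ n, X * P (n + 1) = P (n + 2) + C (β (n + 1)) * P (n + 1) + C (γ (n + 1)) * P n)
    (hP2 : IsMonicOrthogonal_s9 (christoffel L c 2) P2) (k : ℕ) :
    (X - C c) ^ 2 * P2 k = P (k + 2) - C (dCoef P c k) * P (k + 1) + C (eCoef P c k) * P k := by
  have hF : IsMonicOfDegree ((X - C c) ^ 2 * P2 k) (k + 2) := by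
    simpa [add_comm] using ((isMonicOfDegree_X_sub_one c).pow 2).mul (hP2.isMonicOfDegree k)
  have hlow : ∀ i < k, L (((X - C c) ^ 2 * P2 k - P (k + 2)) * P i) = 0 := fun i hi => by
    have h2 := hP2.apply_mul_eq_zero_of_natDegree_lt (p := P i) (n := k)
      (by rw [(hP.isMonicOfDegree i).natDegree_eq]; exact hi)
    rw [christoffel_apply] at h2
    rw [sub_mul, map_sub, hP.orthogonal (k + 2) i (by omega), sub_zero, ← h2]
    ring_nf
  obtain ⟨a, b, hab⟩ := hP.exists_eq_C_mul_add_C_mul (fun n => (hL n).ne')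
    (Nat.lt_succ_iff.mp (hF.natDegree_sub_lt (by omega) (hP.isMonicOfDegree (k + 2)))) hlow
  have hF' : (X - C c) ^ 2 * P2 k = P (k + 2) + C a * P (k + 1) + C b * P k := by
    rw [add_assoc, ← hab]
    ring
  obtain ⟨rfl, rfl⟩ := eq_neg_dCoef_and_eq_eCoef_s9 (c := c) (wronskianAt_pos hP hL hrec k).ne'
    (by rw [← hF']; simp) (by rw [← hF']; simp [derivative_pow])
  rw [hF', C_neg]
  ring

theorem christoffel_apply_mul_eq (hP : IsMonicOrthogonal_s9 L P) (hL : ∀ n, 0 < L (P n ^ 2))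
    (hrec : ∀ n, X * P (n + 1) = P (n + 2) + C (β (n + 1)) * P (n + 1) + C (γ (n + 1)) * P n)
    (hP2 : IsMonicOrthogonal_s9 (christoffel L c 2) P2) (p : ℝ[X]) (k : ℕ) :
    christoffel L c 2 (p * P2 k) = L (p * P (k + 2)) - dCoef P c k * L (p * P (k + 1))
      + eCoef P c k * L (p * P k) := by
  rw [christoffel_apply, mul_left_comm, sq_mul_eq_connection hP hL hrec hP2 k]
  simp only [mul_add, mul_sub, mul_left_comm p (C _), map_add, map_sub, L.map_C_mul]

theorem christoffel_apply_sq (hP : IsMonicOrthogonal_s9 L P) (hL : ∀ n, 0 < L (P n ^ 2))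
    (hrec : ∀ n, X * P (n + 1) = P (n + 2) + C (β (n + 1)) * P (n + 1) + C (γ (n + 1)) * P n)
    (hP2 : IsMonicOrthogonal_s9 (christoffel L c 2) P2) (k : ℕ) :
    christoffel L c 2 (P2 k ^ 2) = eCoef P c k * L (P k ^ 2) := by
  have hk := hP2.isMonicOfDegree k
  rw [sq, christoffel_apply_mul_eq hP hL hrec hP2,
    hP.apply_mul_eq_zero_of_natDegree_lt (by rw [hk.natDegree_eq]; omega),
    hP.apply_mul_eq_zero_of_natDegree_lt (by rw [hk.natDegree_eq]; omega),
    hP.apply_mul_eq_of_isMonicOfDegree hk]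
  ring

theorem eCoef_mul_apply (hP : IsMonicOrthogonal_s9 L P) (hL : ∀ n, 0 < L (P n ^ 2))
    (hrec : ∀ n, X * P (n + 1) = P (n + 2) + C (β (n + 1)) * P (n + 1) + C (γ (n + 1)) * P n)
    (hP2 : IsMonicOrthogonal_s9 (christoffel L c 2) P2) (k : ℕ) :
    eCoef P c k * L (P2 (k + 1) * P k) = dCoef P c k * L (P (k + 1) ^ 2) := by
  have hk := hP2.isMonicOfDegree (k + 1)
  have h := hP2.orthogonal (k + 1) k (by omega)
  rw [christoffel_apply_mul_eq hP hL hrec hP2,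
    hP.apply_mul_eq_zero_of_natDegree_lt (by rw [hk.natDegree_eq]; omega),
    hP.apply_mul_eq_of_isMonicOfDegree hk] at h
  linear_combination h

theorem christoffel_apply_X_mul (hP : IsMonicOrthogonal_s9 L P) (hL : ∀ n, 0 < L (P n ^ 2))
    (hrec : ∀ n, X * P (n + 1) = P (n + 2) + C (β (n + 1)) * P (n + 1) + C (γ (n + 1)) * P n)
    (hP2 : IsMonicOrthogonal_s9 (christoffel L c 2) P2) (k : ℕ) :
    christoffel L c 2 (X * P2 (k + 1) * P2 (k + 1))
      = (β (k + 1) + γ (k + 1) * dCoef P c k / eCoef P c k) * eCoef P c (k + 1)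
          * L (P (k + 1) ^ 2) - dCoef P c (k + 1) * L (P (k + 2) ^ 2) := by
  have hk := hP2.isMonicOfDegree (k + 1)
  have hXk := hP2.isMonicOfDegree_X_mul (k + 1)
  have hXP : L (X * P2 (k + 1) * P (k + 1))
      = β (k + 1) * L (P (k + 1) ^ 2) + γ (k + 1) * L (P2 (k + 1) * P k) := by
    rw [mul_right_comm, mul_comm, hrec k]
    simp only [mul_add, mul_left_comm (P2 (k + 1)) (C _), map_add, L.map_C_mul]
    rw [hP.apply_mul_eq_of_isMonicOfDegree hk, hP.apply_mul_eq_zero_of_natDegree_lt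
      (by rw [hk.natDegree_eq]; omega), zero_add]
  have he := (eCoef_pos (c := c) hP hL hrec k).ne'
  rw [christoffel_apply_mul_eq hP hL hrec hP2,
    hP.apply_mul_eq_zero_of_natDegree_lt (by rw [hXk.natDegree_eq]; omega),
    hP.apply_mul_eq_of_isMonicOfDegree hXk, hXP, show k + 1 + 1 = k + 2 from rfl]
  field_simp
  linear_combination γ (k + 1) * eCoef P c (k + 1) * eCoef_mul_apply hP hL hrec hP2 k

theorem eCoef_succ_mul (hP : IsMonicOrthogonal_s9 L P) (hL : ∀ n, 0 < L (P n ^ 2))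
    (hrec : ∀ n, X * P (n + 1) = P (n + 2) + C (β (n + 1)) * P (n + 1) + C (γ (n + 1)) * P n)
    (k : ℕ) :
    eCoef P c (k + 1) * L (P (k + 1) ^ 2)
      = kernelDiag L P c (k + 2) / kernelDiag L P c (k + 1) * L (P (k + 2) ^ 2) := by
  have hK := (kernelDiag_pos (c := c) hP hL (k + 1)).ne'
  have hN := (hL (k + 1)).ne'
  rw [eCoef_eq_div, wronskianAt_eq_kernelDiag_mul hP (fun n => (hL n).ne') hrec,
    wronskianAt_eq_kernelDiag_mul hP (fun n => (hL n).ne') hrec]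
  field_simp

end Christoffel

theorem integrable_polynomial_eval {μ : Measure ℝ}
    (hmom : ∀ n : ℕ, Integrable (fun x : ℝ => x ^ n) μ)
    (q : ℝ[X]) : Integrable (fun x => q.eval x) μ := by
  simp_rw [eval_eq_sum_range]
  exact integrable_finsetSum _ fun k _ => (hmom k).const_mul _

noncomputable def polyIntegral (μ : Measure ℝ)
    (hmom : ∀ n : ℕ, Integrable (fun x : ℝ => x ^ n) μ) : ℝ[X] →ₗ[ℝ] ℝ where
  toFun q := ∫ x, q.eval x ∂μ
  map_add' p q := by
    simp only [eval_add]
    exact integral_add (integrable_polynomial_eval hmom p) (integrable_polynomial_eval hmom q)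
  map_smul' a p := by simp only [eval_smul, smul_eq_mul, integral_const_mul, RingHom.id_apply]

theorem polyIntegral_apply {μ : Measure ℝ} (hmom : ∀ n : ℕ, Integrable (fun x : ℝ => x ^ n) μ)
    (q : ℝ[X]) :
    polyIntegral μ hmom q = ∫ x, q.eval x ∂μ :=
  rfl

theorem nrmSq_eq_polyIntegral {μ : Measure ℝ} (hmom : ∀ n : ℕ, Integrable (fun x : ℝ => x ^ n) μ)
    (q : ℝ[X]) :
    nrmSq μ q = polyIntegral μ hmom (q ^ 2) := by
  simp [nrmSq, polyIntegral_apply]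

theorem nrmSq2_eq_christoffel {μ : Measure ℝ}
    (hmom : ∀ n : ℕ, Integrable (fun x : ℝ => x ^ n) μ) (c : ℝ) (q : ℝ[X]) :
    nrmSq2 μ c q = christoffel (polyIntegral μ hmom) c 2 (q ^ 2) := by
  simp [nrmSq2, polyIntegral_apply, mul_comm]

theorem Kcc_eq_kernelDiag {μ : Measure ℝ} (hmom : ∀ n : ℕ, Integrable (fun x : ℝ => x ^ n) μ)
    (P : ℕ → ℝ[X]) (c : ℝ) (n : ℕ) :
    Kcc μ P c n = kernelDiag (polyIntegral μ hmom) P c n := by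
  simp only [Kcc, kernelDiag, nrmSq_eq_polyIntegral hmom]

theorem r2C_div_rC_sq {μ : Measure ℝ} {c : ℝ} {P2 P : ℕ → ℝ[X]} (j k : ℕ) :
    (r2C μ c P2 j / rC μ P k) ^ 2 = nrmSq μ (P k) / nrmSq2 μ c (P2 j) := by
  have h1 : 0 ≤ nrmSq μ (P k) := integral_nonneg fun x => sq_nonneg _
  have h2 : 0 ≤ nrmSq2 μ c (P2 j) := integral_nonneg fun x => by positivity
  rw [r2C, rC, div_div_div_cancel_left' _ _ one_ne_zero, div_pow, Real.sq_sqrt h1,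
    Real.sq_sqrt h2]

theorem stmt9_general
    (μ : Measure ℝ)
    (hmom : ∀ n : ℕ, Integrable (fun x : ℝ => x ^ n) μ)
    (hpos : ∀ q : Polynomial ℝ, q ≠ 0 → 0 < ∫ x, q.eval x ^ 2 ∂μ)
    (c : ℝ)
    (P : ℕ → Polynomial ℝ) (hPm : ∀ n, (P n).Monic) (hPd : ∀ n, (P n).natDegree = n)
    (hPo : ∀ m n, m ≠ n → ∫ x, (P m).eval x * (P n).eval x ∂μ = 0)
    (β γ : ℕ → ℝ)
    (hrec : ∀ n : ℕ, 1 ≤ n → X * P n = P (n + 1) + C (β n) * P n + C (γ n) * P (n - 1))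
    (P2 : ℕ → Polynomial ℝ) (hP2m : ∀ n, (P2 n).Monic) (hP2d : ∀ n, (P2 n).natDegree = n)
    (hP2o : ∀ m n, m ≠ n → ∫ x, (P2 m).eval x * (P2 n).eval x * (x - c) ^ 2 ∂μ = 0) :
    ∀ n : ℕ, 1 ≤ n →
      X * P2 n
        = P2 (n + 1) + C (kappaC μ c P P2 β γ n) * P2 n
          + C ((r2C μ c P2 (n - 1) / rC μ P (n + 1)) ^ 2
                * (Kcc μ P c (n + 1) / Kcc μ P c n)) * P2 (n - 1)
      ∧ 0 < (r2C μ c P2 (n - 1) / rC μ P (n + 1)) ^ 2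
              * (Kcc μ P c (n + 1) / Kcc μ P c n) := by
  intro n hn
  obtain ⟨m, rfl⟩ := Nat.exists_eq_add_of_le' hn
  set L := polyIntegral μ hmom
  have hP : IsMonicOrthogonal_s9 L P :=
    ⟨fun n => ⟨hPd n, hPm n⟩, fun m n h => by simpa [L, polyIntegral_apply] using hPo m n h⟩
  have hP2 : IsMonicOrthogonal_s9 (christoffel L c 2) P2 :=
    ⟨fun n => ⟨hP2d n, hP2m n⟩, fun m n h => by
      simpa [L, polyIntegral_apply, mul_comm, mul_left_comm] using hP2o m n h⟩
  have hL : ∀ n, 0 < L (P n ^ 2) := fun n => by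
    simpa [L, polyIntegral_apply] using hpos (P n) (hPm n).ne_zero
  have hrec' : ∀ n,
      X * P (n + 1) = P (n + 2) + C (β (n + 1)) * P (n + 1) + C (γ (n + 1)) * P n :=
    fun n => hrec (n + 1) (by omega)
  have hL2 : ∀ n, 0 < christoffel L c 2 (P2 n ^ 2) := fun n => by
    rw [christoffel_apply_sq hP hL hrec' hP2]
    exact mul_pos (eCoef_pos hP hL hrec' n) (hL n)
  have hκ : kappaC μ c P P2 β γ (m + 1)
      = christoffel L c 2 (X * P2 (m + 1) * P2 (m + 1)) / christoffel L c 2 (P2 (m + 1) ^ 2) := by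
    rw [kappaC, Nat.add_sub_cancel, r2C_div_rC_sq, r2C_div_rC_sq, nrmSq_eq_polyIntegral hmom,
      nrmSq_eq_polyIntegral hmom, nrmSq2_eq_christoffel hmom,
      christoffel_apply_X_mul hP hL hrec' hP2]
    ring
  have hτ : (r2C μ c P2 (m + 1 - 1) / rC μ P (m + 1 + 1)) ^ 2
        * (Kcc μ P c (m + 1 + 1) / Kcc μ P c (m + 1))
      = christoffel L c 2 (P2 (m + 1) ^ 2) / christoffel L c 2 (P2 m ^ 2) := by
    rw [Nat.add_sub_cancel, r2C_div_rC_sq, nrmSq_eq_polyIntegral hmom, nrmSq2_eq_christoffel hmom,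
      Kcc_eq_kernelDiag hmom, Kcc_eq_kernelDiag hmom,
      christoffel_apply_sq hP hL hrec' hP2 (m + 1), eCoef_succ_mul hP hL hrec']
    ring
  rw [hκ, hτ]
  exact ⟨hP2.three_term_recurrence (fun n => (hL2 n).ne') m, div_pos (hL2 _) (hL2 _)⟩

/-- the monic sequence `{P_n^{[2]}}` satisfies, for every `n ≥ 1`,
`x P_n^{[2]}(x) = P_{n+1}^{[2]}(x) + κ_n P_n^{[2]}(x) + τ_n P_{n-1}^{[2]}(x)`, with
`τ_n = (r_{n-1}^{[2]}/r_{n+1})²·(K_{n+1}(c,c)/K_n(c,c)) > 0`. -/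
theorem stmt9
    (μ : Measure ℝ) [IsFiniteMeasure μ]
    (hmom : ∀ n : ℕ, Integrable (fun x : ℝ => x ^ n) μ)
    (hpos : ∀ q : Polynomial ℝ, q ≠ 0 → 0 < ∫ x, q.eval x ^ 2 ∂μ)
    (c : ℝ) (hc : ∀ᵐ x ∂μ, c < x)
    (P : ℕ → Polynomial ℝ) (hPm : ∀ n, (P n).Monic) (hPd : ∀ n, (P n).natDegree = n)
    (hPo : ∀ m n, m ≠ n → ∫ x, (P m).eval x * (P n).eval x ∂μ = 0)
    (β γ : ℕ → ℝ)
    (hrec0 : X * P 0 = P 1 + C (β 0) * P 0)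
    (hrec : ∀ n : ℕ, 1 ≤ n → X * P n = P (n + 1) + C (β n) * P n + C (γ n) * P (n - 1))
    (P2 : ℕ → Polynomial ℝ) (hP2m : ∀ n, (P2 n).Monic) (hP2d : ∀ n, (P2 n).natDegree = n)
    (hP2o : ∀ m n, m ≠ n → ∫ x, (P2 m).eval x * (P2 n).eval x * (x - c) ^ 2 ∂μ = 0) :
    ∀ n : ℕ, 1 ≤ n →
      X * P2 n
        = P2 (n + 1) + C (kappaC μ c P P2 β γ n) * P2 n
          + C ((r2C μ c P2 (n - 1) / rC μ P (n + 1)) ^ 2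
                * (Kcc μ P c (n + 1) / Kcc μ P c n)) * P2 (n - 1)
      ∧ 0 < (r2C μ c P2 (n - 1) / rC μ P (n + 1)) ^ 2
              * (Kcc μ P c (n + 1) / Kcc μ P c n) :=
  stmt9_general μ hmom hpos c P hPm hPd hPo β γ hrec P2 hP2m hP2d hP2o
end

section
/- There exists a semi-infinite matrix R : ℕ × ℕ → ℝ, upper triangular with positive diagonal entries and with R(n,m) = 0 for m > n+2, such that (J_{[2]} − cI)² = R·Rᵀ and (J − cI)² = Rᵀ·R entrywise: for all n, m, Σ_j (J_{[2]}(n,j) − c·δ_{nj})·(J_{[2]}(j,m) − c·δ_{jm}) = Σ_k R(n,k)·R(m,k) and Σ_j (J(n,j) − c·δ_{nj})·(J(j,m) − c·δ_{jm}) = Σ_k R(k,n)·R(k,m), all sums having finitely many nonzero terms. -/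
open MeasureTheory Polynomial

/-! ### Auxiliary machinery -/

/-- Integral of a polynomial against `μ`. -/
noncomputable def iE (μ : Measure ℝ) (q : Polynomial ℝ) : ℝ := ∫ x, q.eval x ∂μ

lemma poly_integrable (μ : Measure ℝ) [IsFiniteMeasure μ]
    (hmom : ∀ n : ℕ, Integrable (fun x : ℝ => x ^ n) μ) (q : Polynomial ℝ) :
    Integrable (fun x => q.eval x) μ := by
  have h : (fun x : ℝ => q.eval x)
      = fun x => ∑ i ∈ Finset.range (q.natDegree + 1), q.coeff i * x ^ i := by
    funext x; rw [Polynomial.eval_eq_sum_range]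
  rw [h]
  exact integrable_finset_sum _ fun i _ => (hmom i).const_mul _

lemma iE_sum (μ : Measure ℝ) [IsFiniteMeasure μ]
    (hmom : ∀ n : ℕ, Integrable (fun x : ℝ => x ^ n) μ)
    (s : Finset ℕ) (f : ℕ → Polynomial ℝ) :
    iE μ (∑ i ∈ s, f i) = ∑ i ∈ s, iE μ (f i) := by
  unfold iE
  have h : (fun x : ℝ => (∑ i ∈ s, f i).eval x) = fun x => ∑ i ∈ s, (f i).eval x := by
    funext x; simp [Polynomial.eval_finset_sum]
  rw [h, integral_finset_sum _ fun i _ => poly_integrable μ hmom (f i)]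

lemma iE_C_mul (μ : Measure ℝ) (a : ℝ) (q : Polynomial ℝ) :
    iE μ (Polynomial.C a * q) = a * iE μ q := by
  unfold iE
  have h : (fun x : ℝ => (Polynomial.C a * q).eval x) = fun x => a * q.eval x := by
    funext x; simp
  rw [h, integral_const_mul]

lemma iE_sub (μ : Measure ℝ) [IsFiniteMeasure μ]
    (hmom : ∀ n : ℕ, Integrable (fun x : ℝ => x ^ n) μ) (q r : Polynomial ℝ) :
    iE μ (q - r) = iE μ q - iE μ r := by
  unfold iE
  have h : (fun x : ℝ => (q - r).eval x) = fun x => q.eval x - r.eval x := by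
    funext x; simp
  rw [h, integral_sub (poly_integrable μ hmom q) (poly_integrable μ hmom r)]

lemma expand_in_basis (Q : ℕ → Polynomial ℝ) (hQm : ∀ n, (Q n).Monic)
    (hQd : ∀ n, (Q n).natDegree = n) :
    ∀ (N : ℕ) (f : Polynomial ℝ), f.natDegree ≤ N →
      ∃ a : ℕ → ℝ, f = ∑ j ∈ Finset.range (N + 1), Polynomial.C (a j) * Q j := by
  intro N
  induction N with
  | zero =>
    intro f hf
    refine ⟨fun _ => f.coeff 0, ?_⟩
    have hQ0 : Q 0 = 1 := Polynomial.eq_one_of_monic_natDegree_zero (hQm 0) (hQd 0)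
    rw [Finset.sum_range_one, hQ0, mul_one]
    exact Polynomial.eq_C_of_natDegree_le_zero hf
  | succ N ih =>
    intro f hf
    by_cases h : f.natDegree ≤ N
    · obtain ⟨a, ha⟩ := ih f h
      refine ⟨fun j => if j = N + 1 then 0 else a j, ?_⟩
      rw [Finset.sum_range_succ]
      beta_reduce
      rw [if_pos rfl, Polynomial.C_0, zero_mul, add_zero, ha]
      refine Finset.sum_congr rfl fun j hj => ?_
      have : j ≠ N + 1 := by simp at hj; omega
      rw [if_neg this]
    · have hdeg : f.natDegree = N + 1 := by omega
      set g := f - Polynomial.C (f.coeff (N + 1)) * Q (N + 1) with hg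
      have hgd : g.natDegree ≤ N := by
        rw [Polynomial.natDegree_le_iff_coeff_eq_zero]
        intro m hm
        rw [hg]
        simp only [Polynomial.coeff_sub, Polynomial.coeff_C_mul]
        rcases eq_or_lt_of_le (Nat.succ_le_of_lt hm) with h1 | h1
        · have hc1 : (Q (N + 1)).coeff (N + 1) = 1 := by
            have h2 := (hQm (N + 1)).coeff_natDegree
            rwa [hQd (N + 1)] at h2
          rw [← h1, hc1, mul_one, sub_self]
        · have e1 : f.coeff m = 0 :=
            Polynomial.coeff_eq_zero_of_natDegree_lt (by omega)
          have e2 : (Q (N + 1)).coeff m = 0 :=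
            Polynomial.coeff_eq_zero_of_natDegree_lt (by rw [hQd (N + 1)]; omega)
          rw [e1, e2, mul_zero, sub_self]
      obtain ⟨b, hb⟩ := ih g hgd
      refine ⟨fun j => if j = N + 1 then f.coeff (N + 1) else b j, ?_⟩
      rw [Finset.sum_range_succ]
      beta_reduce
      rw [if_pos rfl]
      have heq : ∑ j ∈ Finset.range (N + 1),
          Polynomial.C (if j = N + 1 then f.coeff (N + 1) else b j) * Q j
          = ∑ j ∈ Finset.range (N + 1), Polynomial.C (b j) * Q j := by
        refine Finset.sum_congr rfl fun j hj => ?_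
        have : j ≠ N + 1 := by simp at hj; omega
        rw [if_neg this]
      rw [heq, ← hb, hg]
      ring

lemma scaled_span (Q : ℕ → Polynomial ℝ) (hQm : ∀ n, (Q n).Monic)
    (hQd : ∀ n, (Q n).natDegree = n)
    (r : ℕ → ℝ) (hr : ∀ n, r n ≠ 0) (K : ℕ) (f : Polynomial ℝ) (hf : f.natDegree < K) :
    ∃ a : ℕ → ℝ, f = ∑ j ∈ Finset.range K, Polynomial.C (a j) * (Polynomial.C (r j) * Q j) := by
  obtain ⟨b, hb⟩ := expand_in_basis Q hQm hQd (K - 1) f (by omega)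
  have hK : K - 1 + 1 = K := by omega
  rw [hK] at hb
  refine ⟨fun j => b j / r j, ?_⟩
  rw [hb]
  refine Finset.sum_congr rfl fun j hj => ?_
  rw [← mul_assoc, ← Polynomial.C_mul, div_mul_cancel₀ _ (hr j)]

lemma genCoeff (μ : Measure ℝ) [IsFiniteMeasure μ]
    (hmom : ∀ n : ℕ, Integrable (fun x : ℝ => x ^ n) μ)
    (q : ℕ → Polynomial ℝ) (W : Polynomial ℝ)
    (horth : ∀ i j, iE μ (q i * q j * W) = kdel i j)
    (K : ℕ) (a : ℕ → ℝ) (f : Polynomial ℝ)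
    (hf : f = ∑ i ∈ Finset.range K, Polynomial.C (a i) * q i) (j : ℕ) :
    iE μ (f * q j * W) = if j ∈ Finset.range K then a j else 0 := by
  rw [hf, Finset.sum_mul, Finset.sum_mul, iE_sum μ hmom]
  have h : ∀ i ∈ Finset.range K,
      iE μ (Polynomial.C (a i) * q i * q j * W) = a i * kdel i j := by
    intro i _
    rw [show Polynomial.C (a i) * q i * q j * W
        = Polynomial.C (a i) * (q i * q j * W) by ring, iE_C_mul, horth]
  rw [Finset.sum_congr rfl h]
  simp [kdel, mul_ite, Finset.sum_ite_eq']

lemma genParseval (μ : Measure ℝ) [IsFiniteMeasure μ]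
    (hmom : ∀ n : ℕ, Integrable (fun x : ℝ => x ^ n) μ)
    (q : ℕ → Polynomial ℝ) (W : Polynomial ℝ)
    (horth : ∀ i j, iE μ (q i * q j * W) = kdel i j)
    (K : ℕ) (a : ℕ → ℝ) (f : Polynomial ℝ)
    (hf : f = ∑ i ∈ Finset.range K, Polynomial.C (a i) * q i) (g : Polynomial ℝ) :
    iE μ (f * g * W)
      = ∑ j ∈ Finset.range K, iE μ (f * q j * W) * iE μ (g * q j * W) := by
  have hcoef : ∀ j ∈ Finset.range K, iE μ (f * q j * W) = a j := by
    intro j hj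
    rw [genCoeff μ hmom q W horth K a f hf j, if_pos hj]
  calc iE μ (f * g * W) = ∑ j ∈ Finset.range K, a j * iE μ (g * q j * W) := by
        rw [hf, Finset.sum_mul, Finset.sum_mul, iE_sum μ hmom]
        refine Finset.sum_congr rfl fun j hj => ?_
        rw [show Polynomial.C (a j) * q j * g * W
            = Polynomial.C (a j) * (g * q j * W) by ring, iE_C_mul]
    _ = ∑ j ∈ Finset.range K, iE μ (f * q j * W) * iE μ (g * q j * W) :=
        Finset.sum_congr rfl fun j hj => by rw [hcoef j hj]

lemma oVanish (μ : Measure ℝ) [IsFiniteMeasure μ]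
    (hmom : ∀ n : ℕ, Integrable (fun x : ℝ => x ^ n) μ)
    (Q : ℕ → Polynomial ℝ) (hQm : ∀ n, (Q n).Monic) (hQd : ∀ n, (Q n).natDegree = n)
    (W : Polynomial ℝ)
    (hQo : ∀ i j, i ≠ j → iE μ (Q i * Q j * W) = 0)
    (f : Polynomial ℝ) (j : ℕ) (hf : f.natDegree < j) :
    iE μ (f * Q j * W) = 0 := by
  obtain ⟨a, ha⟩ := expand_in_basis Q hQm hQd (j - 1) f (by omega)
  have hj1 : j - 1 + 1 = j := by omega
  rw [hj1] at ha
  rw [ha, Finset.sum_mul, Finset.sum_mul, iE_sum μ hmom]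
  refine Finset.sum_eq_zero fun i hi => ?_
  rw [show Polynomial.C (a i) * Q i * Q j * W
      = Polynomial.C (a i) * (Q i * Q j * W) by ring, iE_C_mul,
    hQo i j (by simp at hi; omega), mul_zero]

lemma bridge1 (μ : Measure ℝ) [IsFiniteMeasure μ]
    (hmom : ∀ n : ℕ, Integrable (fun x : ℝ => x ^ n) μ)
    (c : ℝ) (u v : Polynomial ℝ) :
    (∫ x, x * (u.eval x * v.eval x) ∂μ) - c * iE μ (u * v * 1)
      = iE μ ((X - Polynomial.C c) * u * v * 1) := by
  have h1 : (∫ x, x * (u.eval x * v.eval x) ∂μ) = iE μ (X * (u * v)) := by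
    unfold iE; congr 1; funext x; simp
  rw [h1, ← iE_C_mul μ c, ← iE_sub μ hmom]
  congr 1; ring

lemma bridge2 (μ : Measure ℝ) [IsFiniteMeasure μ]
    (hmom : ∀ n : ℕ, Integrable (fun x : ℝ => x ^ n) μ)
    (c : ℝ) (u v : Polynomial ℝ) :
    (∫ x, x * (u.eval x * v.eval x) * (x - c) ^ 2 ∂μ)
        - c * iE μ (u * v * (X - Polynomial.C c) ^ 2)
      = iE μ ((X - Polynomial.C c) * u * v * (X - Polynomial.C c) ^ 2) := by
  have h1 : (∫ x, x * (u.eval x * v.eval x) * (x - c) ^ 2 ∂μ)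
      = iE μ (X * (u * v) * (X - Polynomial.C c) ^ 2) := by
    unfold iE; congr 1; funext x; simp
  rw [h1, ← iE_C_mul μ c, ← iE_sub μ hmom]
  congr 1; ring

lemma inv_sqrt_mul (v : ℝ) (hv : 0 < v) :
    1 / Real.sqrt v * (1 / Real.sqrt v) * v = 1 := by
  have hs : 0 < Real.sqrt v := Real.sqrt_pos.mpr hv
  rw [div_mul_div_comm, one_mul, Real.mul_self_sqrt hv.le, one_div,
    inv_mul_cancel₀ hv.ne']
/-- there exists a semi-infinite upper triangular matrix `R` with
positive diagonal entries and `R(n,m) = 0` for `m > n+2`, such that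
`(J_{[2]} - cI)² = R·Rᵀ` and `(J - cI)² = Rᵀ·R` entrywise. -/
theorem stmt15
    (μ : Measure ℝ) [IsFiniteMeasure μ]
    (hmom : ∀ n : ℕ, Integrable (fun x : ℝ => x ^ n) μ)
    (hpos : ∀ q : Polynomial ℝ, q ≠ 0 → 0 < ∫ x, q.eval x ^ 2 ∂μ)
    (c : ℝ) (hc : ∀ᵐ x ∂μ, c < x)
    (P : ℕ → Polynomial ℝ) (hPm : ∀ n, (P n).Monic) (hPd : ∀ n, (P n).natDegree = n)
    (hPo : ∀ m n, m ≠ n → ∫ x, (P m).eval x * (P n).eval x ∂μ = 0)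
    (P2 : ℕ → Polynomial ℝ) (hP2m : ∀ n, (P2 n).Monic) (hP2d : ∀ n, (P2 n).natDegree = n)
    (hP2o : ∀ m n, m ≠ n → ∫ x, (P2 m).eval x * (P2 n).eval x * (x - c) ^ 2 ∂μ = 0) :
    ∃ R : ℕ → ℕ → ℝ,
      (∀ n : ℕ, 0 < R n n)
      ∧ (∀ n m : ℕ, m < n → R n m = 0)
      ∧ (∀ n m : ℕ, n + 2 < m → R n m = 0)
      ∧ (∀ n m : ℕ,
          ∑' j : ℕ, (J2mat μ c P2 n j - c * kdel n j) * (J2mat μ c P2 j m - c * kdel j m)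
            = ∑' k : ℕ, R n k * R m k)
      ∧ (∀ n m : ℕ,
          ∑' j : ℕ, (Jmat μ P n j - c * kdel n j) * (Jmat μ P j m - c * kdel j m)
            = ∑' k : ℕ, R k n * R k m) := by
  classical
  -- positivity of norms
  have hnrm : ∀ n, 0 < nrmSq μ (P n) := fun n => hpos (P n) (hPm n).ne_zero
  have hnrm2 : ∀ n, 0 < nrmSq2 μ c (P2 n) := by
    intro n
    have hne : (X - Polynomial.C c) * P2 n ≠ 0 :=
      mul_ne_zero (Polynomial.X_sub_C_ne_zero c) (hP2m n).ne_zero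
    have h := hpos _ hne
    have heq : (fun x : ℝ => ((X - Polynomial.C c) * P2 n).eval x ^ 2)
        = fun x : ℝ => (P2 n).eval x ^ 2 * (x - c) ^ 2 := by
      funext x; simp only [Polynomial.eval_mul, Polynomial.eval_sub, Polynomial.eval_X, Polynomial.eval_C]; ring
    rw [heq] at h
    exact h
  have hr : ∀ n, 0 < rC μ P n := fun n =>
    div_pos one_pos (Real.sqrt_pos.mpr (hnrm n))
  have hr2 : ∀ n, 0 < r2C μ c P2 n := fun n =>
    div_pos one_pos (Real.sqrt_pos.mpr (hnrm2 n))
  -- orthonormality of onP with weight 1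
  have hPP : ∀ i j, iE μ (P i * P j) = ∫ x, (P i).eval x * (P j).eval x ∂μ := by
    intro i j; unfold iE; congr 1; funext x; simp only [Polynomial.eval_mul]
  have horth1 : ∀ i j, iE μ (onP μ P i * onP μ P j * 1) = kdel i j := by
    intro i j
    have hpoly : onP μ P i * onP μ P j * 1
        = Polynomial.C (rC μ P i * rC μ P j) * (P i * P j) := by
      unfold onP; rw [Polynomial.C_mul]; ring
    rw [hpoly, iE_C_mul]
    by_cases hij : i = j
    · subst hij
      have hii : iE μ (P i * P i) = nrmSq μ (P i) := by
        unfold iE nrmSq; congr 1; funext x; simp only [Polynomial.eval_mul]; ring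
      rw [hii]
      unfold rC kdel
      rw [if_pos rfl]
      exact inv_sqrt_mul _ (hnrm i)
    · rw [hPP i j, hPo i j hij, mul_zero]
      unfold kdel; rw [if_neg hij]
  -- orthonormality of onP2 with weight (X - C c)^2
  have hPP2 : ∀ i j, iE μ (P2 i * P2 j * (X - Polynomial.C c) ^ 2)
      = ∫ x, (P2 i).eval x * (P2 j).eval x * (x - c) ^ 2 ∂μ := by
    intro i j; unfold iE; congr 1; funext x; simp only [Polynomial.eval_mul, Polynomial.eval_pow, Polynomial.eval_sub, Polynomial.eval_X, Polynomial.eval_C]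
  have hQo2 : ∀ i j, i ≠ j → iE μ (P2 i * P2 j * (X - Polynomial.C c) ^ 2) = 0 := by
    intro i j hij; rw [hPP2 i j, hP2o i j hij]
  have horth2 : ∀ i j,
      iE μ (onP2 μ c P2 i * onP2 μ c P2 j * (X - Polynomial.C c) ^ 2) = kdel i j := by
    intro i j
    have hpoly : onP2 μ c P2 i * onP2 μ c P2 j * (X - Polynomial.C c) ^ 2
        = Polynomial.C (r2C μ c P2 i * r2C μ c P2 j)
            * (P2 i * P2 j * (X - Polynomial.C c) ^ 2) := by
      unfold onP2; rw [Polynomial.C_mul]; ring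
    rw [hpoly, iE_C_mul]
    by_cases hij : i = j
    · subst hij
      have hii : iE μ (P2 i * P2 i * (X - Polynomial.C c) ^ 2) = nrmSq2 μ c (P2 i) := by
        unfold iE nrmSq2; congr 1; funext x; simp only [Polynomial.eval_mul, Polynomial.eval_pow, Polynomial.eval_sub, Polynomial.eval_X, Polynomial.eval_C]; ring
      rw [hii]
      unfold r2C kdel
      rw [if_pos rfl]
      exact inv_sqrt_mul _ (hnrm2 i)
    · rw [hQo2 i j hij, mul_zero]
      unfold kdel; rw [if_neg hij]
  -- spans
  have hspan1 : ∀ (K : ℕ) (f : Polynomial ℝ), f.natDegree < K →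
      ∃ a : ℕ → ℝ, f = ∑ j ∈ Finset.range K, Polynomial.C (a j) * onP μ P j := by
    intro K f hf
    obtain ⟨a, ha⟩ := scaled_span P hPm hPd (rC μ P) (fun n => (hr n).ne') K f hf
    exact ⟨a, ha⟩
  have hspan2 : ∀ (K : ℕ) (f : Polynomial ℝ), f.natDegree < K →
      ∃ a : ℕ → ℝ, f = ∑ j ∈ Finset.range K, Polynomial.C (a j) * onP2 μ c P2 j := by
    intro K f hf
    obtain ⟨a, ha⟩ := scaled_span P2 hP2m hP2d (r2C μ c P2) (fun n => (hr2 n).ne') K f hf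
    exact ⟨a, ha⟩
  -- degree bounds
  have hdeg1 : ∀ n, (onP μ P n).natDegree ≤ n := fun n =>
    le_trans (Polynomial.natDegree_C_mul_le _ _) (le_of_eq (hPd n))
  have hdeg2 : ∀ n, (onP2 μ c P2 n).natDegree ≤ n := fun n =>
    le_trans (Polynomial.natDegree_C_mul_le _ _) (le_of_eq (hP2d n))
  have hdegX : (X - Polynomial.C c : Polynomial ℝ).natDegree = 1 :=
    Polynomial.natDegree_X_sub_C c
  have hdegW : ((X - Polynomial.C c : Polynomial ℝ) ^ 2).natDegree ≤ 2 := by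
    rw [Polynomial.natDegree_pow, hdegX]
  have hdegF : ∀ n, ((X - Polynomial.C c) * onP μ P n).natDegree < n + 2 := by
    intro n
    have h1 := Polynomial.natDegree_mul_le
      (p := (X - Polynomial.C c : Polynomial ℝ)) (q := onP μ P n)
    have h2 := hdeg1 n
    omega
  have hdegF2 : ∀ n, ((X - Polynomial.C c) * onP2 μ c P2 n).natDegree < n + 2 := by
    intro n
    have h1 := Polynomial.natDegree_mul_le
      (p := (X - Polynomial.C c : Polynomial ℝ)) (q := onP2 μ c P2 n)
    have h2 := hdeg2 n
    omega
  have hdegG : ∀ n, (onP2 μ c P2 n * (X - Polynomial.C c) ^ 2).natDegree < n + 3 := by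
    intro n
    have h1 := Polynomial.natDegree_mul_le
      (p := onP2 μ c P2 n) (q := (X - Polynomial.C c : Polynomial ℝ) ^ 2)
    have h2 := hdeg2 n
    omega
  -- the matrix R
  refine ⟨fun n m => iE μ (onP2 μ c P2 n * onP μ P m * (X - Polynomial.C c) ^ 2),
    ?_, ?_, ?_, ?_, ?_⟩
  · -- positive diagonal
    intro n
    have hpoly : onP2 μ c P2 n * onP μ P n * (X - Polynomial.C c) ^ 2
        = Polynomial.C (r2C μ c P2 n) * (Polynomial.C (rC μ P n)
            * (P2 n * P n * (X - Polynomial.C c) ^ 2)) := by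
      unfold onP onP2; ring
    show 0 < iE μ (onP2 μ c P2 n * onP μ P n * (X - Polynomial.C c) ^ 2)
    rw [hpoly, iE_C_mul, iE_C_mul]
    have key : iE μ (P2 n * P n * (X - Polynomial.C c) ^ 2) = nrmSq2 μ c (P2 n) := by
      have hzero : iE μ ((P n - P2 n) * P2 n * (X - Polynomial.C c) ^ 2) = 0 := by
        by_cases hd : P n - P2 n = 0
        · rw [hd, zero_mul, zero_mul]
          unfold iE; simp
        · have hn : 0 < n := by
            rcases Nat.eq_zero_or_pos n with h0 | h0
            · exfalso
              apply hd
              rw [h0, Polynomial.eq_one_of_monic_natDegree_zero (hPm 0) (hPd 0),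
                Polynomial.eq_one_of_monic_natDegree_zero (hP2m 0) (hP2d 0), sub_self]
            · exact h0
          have hdn : (P n - P2 n).natDegree < n := by
            have hle : (P n - P2 n).natDegree ≤ n - 1 := by
              rw [Polynomial.natDegree_le_iff_coeff_eq_zero]
              intro m hm
              rw [Polynomial.coeff_sub]
              rcases eq_or_lt_of_le (show n ≤ m by omega) with h1 | h1
              · have c1 : (P n).coeff n = 1 := by
                  have := (hPm n).coeff_natDegree; rwa [hPd n] at this
                have c2 : (P2 n).coeff n = 1 := by
                  have := (hP2m n).coeff_natDegree; rwa [hP2d n] at this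
                rw [← h1, c1, c2, sub_self]
              · have e1 : (P n).coeff m = 0 :=
                  Polynomial.coeff_eq_zero_of_natDegree_lt (by rw [hPd n]; omega)
                have e2 : (P2 n).coeff m = 0 :=
                  Polynomial.coeff_eq_zero_of_natDegree_lt (by rw [hP2d n]; omega)
                rw [e1, e2, sub_self]
            omega
          exact oVanish μ hmom P2 hP2m hP2d _ hQo2 _ n hdn
      have hsplit : iE μ (P2 n * P n * (X - Polynomial.C c) ^ 2)
          - iE μ (P2 n * P2 n * (X - Polynomial.C c) ^ 2)
          = iE μ ((P n - P2 n) * P2 n * (X - Polynomial.C c) ^ 2) := by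
        rw [← iE_sub μ hmom]; congr 1; ring
      have h22 : iE μ (P2 n * P2 n * (X - Polynomial.C c) ^ 2) = nrmSq2 μ c (P2 n) := by
        unfold iE nrmSq2; congr 1; funext x; simp only [Polynomial.eval_mul, Polynomial.eval_pow, Polynomial.eval_sub, Polynomial.eval_X, Polynomial.eval_C]; ring
      rw [hzero] at hsplit
      linarith
    rw [key]
    exact mul_pos (hr2 n) (mul_pos (hr n) (hnrm2 n))
  · -- lower triangular zeros
    intro n m hmn
    show iE μ (onP2 μ c P2 n * onP μ P m * (X - Polynomial.C c) ^ 2) = 0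
    rw [show onP2 μ c P2 n * onP μ P m * (X - Polynomial.C c) ^ 2
        = onP μ P m * onP2 μ c P2 n * (X - Polynomial.C c) ^ 2 by ring]
    obtain ⟨a, ha⟩ := hspan2 (m + 1) (onP μ P m) (lt_of_le_of_lt (hdeg1 m) (Nat.lt_succ_self m))
    rw [genCoeff μ hmom (onP2 μ c P2) ((X - Polynomial.C c) ^ 2) horth2 (m + 1) a _ ha n,
      if_neg (by simp; omega)]
  · -- upper band zeros
    intro n m hnm
    show iE μ (onP2 μ c P2 n * onP μ P m * (X - Polynomial.C c) ^ 2) = 0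
    rw [show onP2 μ c P2 n * onP μ P m * (X - Polynomial.C c) ^ 2
        = (onP2 μ c P2 n * (X - Polynomial.C c) ^ 2) * onP μ P m * 1 by ring]
    obtain ⟨a, ha⟩ := hspan1 (n + 3) (onP2 μ c P2 n * (X - Polynomial.C c) ^ 2) (hdegG n)
    rw [genCoeff μ hmom (onP μ P) 1 horth1 (n + 3) a _ ha m,
      if_neg (by simp; omega)]
  · -- (J2 - c)^2 = R Rᵀ
    intro n m
    have hJ2 : ∀ i j, J2mat μ c P2 i j - c * kdel i j
        = iE μ ((X - Polynomial.C c) * onP2 μ c P2 i * onP2 μ c P2 j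
            * (X - Polynomial.C c) ^ 2) := by
      intro i j
      rw [← horth2 i j]
      exact bridge2 μ hmom c (onP2 μ c P2 i) (onP2 μ c P2 j)
    obtain ⟨a, ha⟩ := hspan2 (n + 2) ((X - Polynomial.C c) * onP2 μ c P2 n) (hdegF2 n)
    obtain ⟨b, hb⟩ := hspan1 (n + 3) (onP2 μ c P2 n * (X - Polynomial.C c) ^ 2) (hdegG n)
    have hL : (∑' j : ℕ, (J2mat μ c P2 n j - c * kdel n j) * (J2mat μ c P2 j m - c * kdel j m))
        = iE μ (((X - Polynomial.C c) * onP2 μ c P2 n)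
            * ((X - Polynomial.C c) * onP2 μ c P2 m) * (X - Polynomial.C c) ^ 2) := by
      have hc1 : ∀ j : ℕ, (J2mat μ c P2 n j - c * kdel n j) * (J2mat μ c P2 j m - c * kdel j m)
          = iE μ (((X - Polynomial.C c) * onP2 μ c P2 n) * onP2 μ c P2 j
              * (X - Polynomial.C c) ^ 2)
            * iE μ (((X - Polynomial.C c) * onP2 μ c P2 m) * onP2 μ c P2 j
              * (X - Polynomial.C c) ^ 2) := by
        intro j
        rw [hJ2 n j, hJ2 j m]
        congr 2 <;> ring
      rw [tsum_congr hc1]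
      rw [tsum_eq_sum (s := Finset.range (n + 2)) (fun j hj => by
        rw [genCoeff μ hmom (onP2 μ c P2) ((X - Polynomial.C c) ^ 2) horth2 (n + 2) a _ ha j,
          if_neg hj, zero_mul])]
      exact (genParseval μ hmom (onP2 μ c P2) ((X - Polynomial.C c) ^ 2) horth2 (n + 2) a _ ha
        ((X - Polynomial.C c) * onP2 μ c P2 m)).symm
    have hR : (∑' k : ℕ,
          iE μ (onP2 μ c P2 n * onP μ P k * (X - Polynomial.C c) ^ 2)
            * iE μ (onP2 μ c P2 m * onP μ P k * (X - Polynomial.C c) ^ 2))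
        = iE μ ((onP2 μ c P2 n * (X - Polynomial.C c) ^ 2)
            * (onP2 μ c P2 m * (X - Polynomial.C c) ^ 2) * 1) := by
      have hc1 : ∀ k : ℕ,
          iE μ (onP2 μ c P2 n * onP μ P k * (X - Polynomial.C c) ^ 2)
            * iE μ (onP2 μ c P2 m * onP μ P k * (X - Polynomial.C c) ^ 2)
          = iE μ ((onP2 μ c P2 n * (X - Polynomial.C c) ^ 2) * onP μ P k * 1)
            * iE μ ((onP2 μ c P2 m * (X - Polynomial.C c) ^ 2) * onP μ P k * 1) := by
        intro k
        congr 2 <;> ring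
      rw [tsum_congr hc1]
      rw [tsum_eq_sum (s := Finset.range (n + 3)) (fun k hk => by
        rw [genCoeff μ hmom (onP μ P) 1 horth1 (n + 3) b _ hb k, if_neg hk, zero_mul])]
      exact (genParseval μ hmom (onP μ P) 1 horth1 (n + 3) b _ hb
        (onP2 μ c P2 m * (X - Polynomial.C c) ^ 2)).symm
    rw [hL, hR]
    congr 1
    ring
  · -- (J - c)^2 = Rᵀ R
    intro n m
    have hJ : ∀ i j, Jmat μ P i j - c * kdel i j
        = iE μ ((X - Polynomial.C c) * onP μ P i * onP μ P j * 1) := by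
      intro i j
      rw [← horth1 i j]
      exact bridge1 μ hmom c (onP μ P i) (onP μ P j)
    obtain ⟨a, ha⟩ := hspan1 (n + 2) ((X - Polynomial.C c) * onP μ P n) (hdegF n)
    obtain ⟨b, hb⟩ := hspan2 (n + 1) (onP μ P n) (lt_of_le_of_lt (hdeg1 n) (Nat.lt_succ_self n))
    have hL : (∑' j : ℕ, (Jmat μ P n j - c * kdel n j) * (Jmat μ P j m - c * kdel j m))
        = iE μ (((X - Polynomial.C c) * onP μ P n)
            * ((X - Polynomial.C c) * onP μ P m) * 1) := by
      have hc1 : ∀ j : ℕ, (Jmat μ P n j - c * kdel n j) * (Jmat μ P j m - c * kdel j m)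
          = iE μ (((X - Polynomial.C c) * onP μ P n) * onP μ P j * 1)
            * iE μ (((X - Polynomial.C c) * onP μ P m) * onP μ P j * 1) := by
        intro j
        rw [hJ n j, hJ j m]
        congr 2 <;> ring
      rw [tsum_congr hc1]
      rw [tsum_eq_sum (s := Finset.range (n + 2)) (fun j hj => by
        rw [genCoeff μ hmom (onP μ P) 1 horth1 (n + 2) a _ ha j, if_neg hj, zero_mul])]
      exact (genParseval μ hmom (onP μ P) 1 horth1 (n + 2) a _ ha
        ((X - Polynomial.C c) * onP μ P m)).symm
    have hR : (∑' k : ℕ,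
          iE μ (onP2 μ c P2 k * onP μ P n * (X - Polynomial.C c) ^ 2)
            * iE μ (onP2 μ c P2 k * onP μ P m * (X - Polynomial.C c) ^ 2))
        = iE μ (onP μ P n * onP μ P m * (X - Polynomial.C c) ^ 2) := by
      have hc1 : ∀ k : ℕ,
          iE μ (onP2 μ c P2 k * onP μ P n * (X - Polynomial.C c) ^ 2)
            * iE μ (onP2 μ c P2 k * onP μ P m * (X - Polynomial.C c) ^ 2)
          = iE μ (onP μ P n * onP2 μ c P2 k * (X - Polynomial.C c) ^ 2)
            * iE μ (onP μ P m * onP2 μ c P2 k * (X - Polynomial.C c) ^ 2) := by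
        intro k
        congr 2 <;> ring
      rw [tsum_congr hc1]
      rw [tsum_eq_sum (s := Finset.range (n + 1)) (fun k hk => by
        rw [genCoeff μ hmom (onP2 μ c P2) ((X - Polynomial.C c) ^ 2) horth2 (n + 1) b _ hb k,
          if_neg hk, zero_mul])]
      exact (genParseval μ hmom (onP2 μ c P2) ((X - Polynomial.C c) ^ 2) horth2 (n + 1) b _ hb
        (onP μ P m)).symm
    rw [hL, hR]
    congr 1
    ring
end

section
/- The five diagonal matrix H admits the Cholesky factorization H = T·Tᵀ; entrywise: for all n, m ≥ 0, ⟨(x−c)² s_n^{M,N}, s_m^{M,N}⟩_S = Σ_{j=0}^{min(n,m)} γ_{j,n}·γ_{j,m}. -/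
open MeasureTheory Polynomial

/-!
Since `(x - c)²` vanishes to second order at `c`, the discrete part of the Sobolev product drops
out of `H(n, m)`, which is therefore `⟨s_n, s_m⟩_{[2]}`. As `s_n` has degree `n`, it lies in the span
of the orthonormal polynomials `p_0^{[2]}, …, p_n^{[2]}`, with Fourier coefficients `γ_{j,n}`, and
Parseval's identity in that span gives the sum over `j ≤ min(n, m)`.
-/

namespace LinearMap.BilinForm

variable {R V : Type*} [CommRing R] [AddCommGroup V] [Module R V]
  {B : LinearMap.BilinForm R V} {q : ℕ → V}

theorem apply_eq_zero_of_mem_span_image_Iic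
    (hq : ∀ i j, B (q i) (q j) = if i = j then 1 else 0) {n k : ℕ} (hk : n < k) {u : V}
    (hu : u ∈ Submodule.span R (q '' Set.Iic n)) : B u (q k) = 0 := by
  suffices Submodule.span R (q '' Set.Iic n) ≤ LinearMap.ker (B.flip (q k)) from this hu
  rw [Submodule.span_le]
  rintro _ ⟨i, hi, rfl⟩
  simp [hq, (Set.mem_Iic.mp hi).trans_lt hk |>.ne]

theorem eq_sum_apply_smul_of_mem_span_image_Iic
    (hq : ∀ i j, B (q i) (q j) = if i = j then 1 else 0) {n : ℕ} {u : V}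
    (hu : u ∈ Submodule.span R (q '' Set.Iic n)) :
    u = ∑ j ∈ Finset.range (n + 1), B u (q j) • q j := by
  induction hu using Submodule.span_induction with
  | mem _ h =>
    obtain ⟨i, hi, rfl⟩ := h
    have : i ∈ Finset.range (n + 1) := Finset.mem_range_succ_iff.mpr hi
    simp [hq, this]
  | zero => simp
  | add u w _ _ hu hw =>
    simp only [map_add, LinearMap.add_apply, add_smul, Finset.sum_add_distrib]
    rw [← hu, ← hw]
  | smul a u _ hu =>
    simp only [map_smul, LinearMap.smul_apply, smul_eq_mul, mul_smul, ← Finset.smul_sum]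
    rw [← hu]

theorem apply_eq_sum_of_mem_span_image_Iic
    (hq : ∀ i j, B (q i) (q j) = if i = j then 1 else 0) {n m : ℕ} {u w : V}
    (hu : u ∈ Submodule.span R (q '' Set.Iic n)) (hw : w ∈ Submodule.span R (q '' Set.Iic m)) :
    B u w = ∑ j ∈ Finset.range (min n m + 1), B u (q j) * B (q j) w := by
  have hq' : ∀ i j, B.flip (q i) (q j) = if i = j then 1 else 0 := fun i j => by
    simp [hq, eq_comm]
  conv_lhs => rw [eq_sum_apply_smul_of_mem_span_image_Iic hq' hw]
  simp only [map_sum, map_smul, flip_apply, smul_eq_mul]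
  refine (Finset.sum_subset (by simp) fun k hkm hkmin => ?_).symm.trans
    (Finset.sum_congr rfl fun k _ => mul_comm _ _)
  have hnk : n < k := by simp only [Finset.mem_range] at hkm hkmin; omega
  simp [apply_eq_zero_of_mem_span_image_Iic hq hnk hu]

end LinearMap.BilinForm

namespace Polynomial

theorem mem_span_image_Iic_of_natDegree_le {K : Type*} [Field K] {p : ℕ → K[X]}
    (hp0 : ∀ i, p i ≠ 0) (hpd : ∀ i, (p i).natDegree = i) {n : ℕ} {f : K[X]}
    (hf : f.natDegree ≤ n) : f ∈ Submodule.span K (p '' Set.Iic n) := by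
  let s : Sequence K := ⟨p, fun i => (degree_eq_iff_natDegree_eq (hp0 i)).mpr (hpd i)⟩
  rw [show p = s from rfl, s.span_degreeLE fun i _ => (leadingCoeff_ne_zero.mpr (hp0 i)).isUnit,
    mem_degreeLE]
  exact degree_le_of_natDegree_le hf

variable {μ : Measure ℝ}

theorem integrable_eval_of_integrable_pow (hμ : ∀ n : ℕ, Integrable (fun x : ℝ => x ^ n) μ)
    (p : ℝ[X]) : Integrable (fun x => p.eval x) μ := by
  simp_rw [eval_eq_sum_range]
  exact integrable_finsetSum _ fun i _ => (hμ i).const_mul _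

noncomputable def integralₗ (hμ : ∀ n : ℕ, Integrable (fun x : ℝ => x ^ n) μ) : ℝ[X] →ₗ[ℝ] ℝ where
  toFun p := ∫ x, p.eval x ∂μ
  map_add' p q := by
    simp only [eval_add]
    exact integral_add (integrable_eval_of_integrable_pow hμ p)
      (integrable_eval_of_integrable_pow hμ q)
  map_smul' a p := by simp [integral_const_mul]

end Polynomial

section Christoffel

variable {μ : Measure ℝ}

/-- The inner product `⟨f, g⟩_{[2]}` of the Christoffel measure `(x - c)² dμ`. -/
noncomputable def christoffelForm (hμ : ∀ n : ℕ, Integrable (fun x : ℝ => x ^ n) μ) (c : ℝ) :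
    LinearMap.BilinForm ℝ ℝ[X] :=
  (LinearMap.mul ℝ ℝ[X]).compr₂ (integralₗ hμ ∘ₗ LinearMap.mulRight ℝ ((X - C c) ^ 2))

theorem christoffelForm_apply (hμ : ∀ n : ℕ, Integrable (fun x : ℝ => x ^ n) μ) (c : ℝ)
    (f g : ℝ[X]) :
    christoffelForm hμ c f g = ∫ x, f.eval x * g.eval x * (x - c) ^ 2 ∂μ := by
  simp [christoffelForm, integralₗ]

theorem christoffelForm_comm (hμ : ∀ n : ℕ, Integrable (fun x : ℝ => x ^ n) μ) (c : ℝ)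
    (f g : ℝ[X]) :
    christoffelForm hμ c f g = christoffelForm hμ c g f := by
  simp only [christoffelForm_apply, mul_comm (f.eval _)]

variable {c : ℝ}

theorem nrmSq2_pos (hpos : ∀ q : ℝ[X], q ≠ 0 → 0 < ∫ x, q.eval x ^ 2 ∂μ) {q : ℝ[X]}
    (hq : q ≠ 0) : 0 < nrmSq2 μ c q := by
  unfold nrmSq2
  convert hpos ((X - C c) * q) (mul_ne_zero (X_sub_C_ne_zero c) hq) using 3 with x
  simp only [eval_mul, eval_sub, eval_X, eval_C]
  ring

variable {P2 : ℕ → ℝ[X]}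

theorem r2C_pos (hpos : ∀ q : ℝ[X], q ≠ 0 → 0 < ∫ x, q.eval x ^ 2 ∂μ)
    (hP2m : ∀ n, (P2 n).Monic) (j : ℕ) : 0 < r2C μ c P2 j :=
  one_div_pos.mpr (Real.sqrt_pos.mpr (nrmSq2_pos hpos (hP2m j).ne_zero))

theorem christoffelForm_onP2 (hμ : ∀ n : ℕ, Integrable (fun x : ℝ => x ^ n) μ)
    (hpos : ∀ q : ℝ[X], q ≠ 0 → 0 < ∫ x, q.eval x ^ 2 ∂μ) (hP2m : ∀ n, (P2 n).Monic)
    (hP2o : ∀ m n, m ≠ n → ∫ x, (P2 m).eval x * (P2 n).eval x * (x - c) ^ 2 ∂μ = 0)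
    (i j : ℕ) : christoffelForm hμ c (onP2 μ c P2 i) (onP2 μ c P2 j) = if i = j then 1 else 0 := by
  have hscale : christoffelForm hμ c (onP2 μ c P2 i) (onP2 μ c P2 j)
      = r2C μ c P2 i * r2C μ c P2 j * ∫ x, (P2 i).eval x * (P2 j).eval x * (x - c) ^ 2 ∂μ := by
    rw [christoffelForm_apply, ← integral_const_mul]
    congr 1 with x
    simp only [onP2, eval_mul, eval_C]
    ring
  split_ifs with hij
  · subst hij
    have hnrm : 0 < nrmSq2 μ c (P2 i) := nrmSq2_pos hpos (hP2m i).ne_zero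
    have hsq : ∫ x, (P2 i).eval x * (P2 i).eval x * (x - c) ^ 2 ∂μ = nrmSq2 μ c (P2 i) := by
      unfold nrmSq2
      congr 1 with x
      ring
    rw [hscale, hsq, r2C, div_mul_div_comm, one_mul, Real.mul_self_sqrt hnrm.le,
      one_div_mul_cancel hnrm.ne']
  · rw [hscale, hP2o i j hij, mul_zero]

theorem natDegree_onP2 (hpos : ∀ q : ℝ[X], q ≠ 0 → 0 < ∫ x, q.eval x ^ 2 ∂μ)
    (hP2m : ∀ n, (P2 n).Monic) (hP2d : ∀ n, (P2 n).natDegree = n) (j : ℕ) :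
    (onP2 μ c P2 j).natDegree = j := by
  rw [onP2, natDegree_C_mul (r2C_pos hpos hP2m j).ne', hP2d]

theorem onP2_ne_zero (hpos : ∀ q : ℝ[X], q ≠ 0 → 0 < ∫ x, q.eval x ^ 2 ∂μ)
    (hP2m : ∀ n, (P2 n).Monic) (j : ℕ) : onP2 μ c P2 j ≠ 0 :=
  mul_ne_zero (C_ne_zero.mpr (r2C_pos hpos hP2m j).ne') (hP2m j).ne_zero

end Christoffel

theorem ipS_X_sub_C_sq_mul_left (μ : Measure ℝ) (c M N : ℝ) (f g : ℝ[X]) :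
    ipS μ c M N ((X - C c) ^ 2 * f) g = ∫ x, f.eval x * g.eval x * (x - c) ^ 2 ∂μ := by
  have hder : (derivative ((X - C c) ^ 2 * f)).eval c = 0 := by
    simp [derivative_mul, derivative_pow]
  simp only [ipS, hder, eval_mul, eval_pow, eval_sub, eval_X, eval_C, sub_self,
    zero_pow two_ne_zero, zero_mul, mul_zero, add_zero]
  congr 1 with x
  ring

theorem natDegree_sN_le {μ : Measure ℝ} {c M N : ℝ} {S : ℕ → ℝ[X]}
    (hSd : ∀ n, (S n).natDegree = n) (n : ℕ) : (sN μ c M N S n).natDegree ≤ n :=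
  (natDegree_C_mul_le _ _).trans (hSd n).le

open LinearMap.BilinForm in
theorem stmt16_general
    (μ : Measure ℝ)
    (hmom : ∀ n : ℕ, Integrable (fun x : ℝ => x ^ n) μ)
    (hpos : ∀ q : Polynomial ℝ, q ≠ 0 → 0 < ∫ x, q.eval x ^ 2 ∂μ)
    (c : ℝ)
    (P2 : ℕ → Polynomial ℝ) (hP2m : ∀ n, (P2 n).Monic) (hP2d : ∀ n, (P2 n).natDegree = n)
    (hP2o : ∀ m n, m ≠ n → ∫ x, (P2 m).eval x * (P2 n).eval x * (x - c) ^ 2 ∂μ = 0)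
    (M N : ℝ)
    (S : ℕ → Polynomial ℝ) (hSd : ∀ n, (S n).natDegree = n) :
    ∀ n m : ℕ,
      Hmat μ c M N S n m
        = ∑ j ∈ Finset.range (min n m + 1), gamC μ c M N S P2 j n * gamC μ c M N S P2 j m := by
  intro n m
  have hmem (k : ℕ) : sN μ c M N S k ∈ Submodule.span ℝ (onP2 μ c P2 '' Set.Iic k) :=
    mem_span_image_Iic_of_natDegree_le (onP2_ne_zero hpos hP2m) (natDegree_onP2 hpos hP2m hP2d)
      (natDegree_sN_le hSd k)
  have hgam (j k : ℕ) :
      gamC μ c M N S P2 j k = christoffelForm hmom c (sN μ c M N S k) (onP2 μ c P2 j) :=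
    (christoffelForm_apply hmom c _ _).symm
  rw [Hmat, ipS_X_sub_C_sq_mul_left, ← christoffelForm_apply hmom,
    apply_eq_sum_of_mem_span_image_Iic (christoffelForm_onP2 hmom hpos hP2m hP2o) (hmem n) (hmem m)]
  simp only [hgam, christoffelForm_comm hmom c (onP2 μ c P2 _)]

/-- the five diagonal matrix `H` admits the Cholesky factorization
`H = T·Tᵀ`; entrywise
`⟨(x-c)² s_n^{M,N}, s_m^{M,N}⟩_S = Σ_{j=0}^{min(n,m)} γ_{j,n} γ_{j,m}`. -/
theorem stmt16
    (μ : Measure ℝ) [IsFiniteMeasure μ]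
    (hmom : ∀ n : ℕ, Integrable (fun x : ℝ => x ^ n) μ)
    (hpos : ∀ q : Polynomial ℝ, q ≠ 0 → 0 < ∫ x, q.eval x ^ 2 ∂μ)
    (c : ℝ) (hc : ∀ᵐ x ∂μ, c < x)
    (P2 : ℕ → Polynomial ℝ) (hP2m : ∀ n, (P2 n).Monic) (hP2d : ∀ n, (P2 n).natDegree = n)
    (hP2o : ∀ m n, m ≠ n → ∫ x, (P2 m).eval x * (P2 n).eval x * (x - c) ^ 2 ∂μ = 0)
    (M N : ℝ) (hM : 0 ≤ M) (hN : 0 ≤ N)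
    (S : ℕ → Polynomial ℝ) (hSm : ∀ n, (S n).Monic) (hSd : ∀ n, (S n).natDegree = n)
    (hSo : ∀ m n, m ≠ n → ipS μ c M N (S m) (S n) = 0) :
    ∀ n m : ℕ,
      Hmat μ c M N S n m
        = ∑ j ∈ Finset.range (min n m + 1), gamC μ c M N S P2 j n * gamC μ c M N S P2 j m :=
  stmt16_general μ hmom hpos c P2 hP2m hP2d hP2o M N S hSd
end
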